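/- arXiv:1711.04676 — 7 statements merged into one kernel-verified Lean document; each statement's English description precedes it below -/
import Mathlib

section
/- Let X and Y be two independent strictly positive random variables, and let α > 0. Assume that lim_{t→∞} log ℙ(X > t)/log t = −α and that limsup_{t→∞} log ℙ(Y > t)/log t ≤ −α. Then lim_{t→∞} log ℙ(XY > t)/log t = −α. -/
/-!
Write `f(t) = ℙ(X > t)`, `g(t) = ℙ(Y > t)`. For the lower bound pick `c > 0` with `g(c) > 0`;
then `ℙ(XY > t) ≥ f(t/c) g(c)`, which decays like `t^{-α+o(1)}`. For the upper bound put
`u = t^{1/n}` and locate `Y` in one of the intervals `(u^i, u^{i+1}]`: either `X > t`, or `Y > t`,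
or `X > t/u^{i+1}` and `Y > u^i` for some `i < n`. Since `f, g ≤ K s^{-β}` for every `β < α`,
independence gives each of these `n + 2` events probability `O(t^{-β(1-1/n)})`, and letting
`β ↑ α`, `n → ∞` yields the matching upper exponent.
-/

open MeasureTheory Filter ProbabilityTheory Real Set Topology

section Exponents

variable {f : ℝ → ℝ}

lemma tendsto_logb_const_mul_rpow {C : ℝ} (hC : 0 < C) (a : ℝ) :
    Tendsto (fun t => logb t (C * t ^ a)) atTop (𝓝 a) := by
  have hlogb : Tendsto (fun t => logb t C) atTop (𝓝 0) :=
    tendsto_const_nhds.div_atTop tendsto_log_atTop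
  refine (zero_add a ▸ hlogb.add_const a).congr' ?_
  filter_upwards [eventually_gt_atTop 1] with t ht
  rw [logb_mul hC.ne' (rpow_pos_of_pos (by linarith) a).ne', logb_rpow (by linarith) ht.ne']

lemma tendsto_logb_of_rpow_bounds {h : ℝ → ℝ} {L : ℝ}
    (hlow : ∀ a < L, ∃ C > 0, ∀ᶠ t in atTop, C * t ^ a ≤ h t)
    (hupp : ∀ b > L, ∃ C > 0, ∀ᶠ t in atTop, h t ≤ C * t ^ b) :
    Tendsto (fun t => logb t (h t)) atTop (𝓝 L) := by
  refine tendsto_order.2 ⟨fun a' ha' => ?_, fun b' hb' => ?_⟩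
  · obtain ⟨a, ha', ha⟩ := exists_between ha'
    obtain ⟨C, hC, hle⟩ := hlow a ha
    filter_upwards [(tendsto_logb_const_mul_rpow hC a).eventually (lt_mem_nhds ha'), hle,
      eventually_gt_atTop 1] with t hlt hle ht
    exact hlt.trans_le (logb_le_logb_of_le ht (by positivity) hle)
  · obtain ⟨b, hb, hb'⟩ := exists_between hb'
    obtain ⟨C, hC, hle⟩ := hupp b hb
    obtain ⟨C', hC', hpos⟩ := hlow (L - 1) (by linarith)
    filter_upwards [(tendsto_logb_const_mul_rpow hC b).eventually (gt_mem_nhds hb'), hle, hpos,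
      eventually_gt_atTop 1] with t hlt hle hpos ht
    exact (logb_le_logb_of_le ht (lt_of_lt_of_le (by positivity) hpos) hle).trans_lt hlt

lemma eventually_rpow_le_of_tendsto_logb (hf0 : ∀ s, 0 ≤ f s) {L a : ℝ}
    (hf : Tendsto (fun s => logb s (f s)) atTop (𝓝 L)) (hL : L < 0) (ha : a < L) :
    ∀ᶠ s in atTop, s ^ a ≤ f s := by
  filter_upwards [hf.eventually (lt_mem_nhds ha), hf.eventually (gt_mem_nhds hL),
    eventually_gt_atTop 1] with s hlt hneg hs
  -- `logb s 0 = 0`, so a negative value of `logb s (f s)` rules out `f s = 0`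
  have hpos : 0 < f s := (hf0 s).lt_of_ne fun h => by simp [← h] at hneg
  exact ((lt_logb_iff_rpow_lt hs hpos).1 hlt).le

lemma exists_le_mul_rpow_of_limsup_logb_le (hf0 : ∀ s, 0 ≤ f s) (hf1 : ∀ s, f s ≤ 1) {L b : ℝ}
    (hf : limsup (fun s => logb s (f s)) atTop ≤ L) (hLb : L < b) (hb : b ≤ 0) :
    ∃ K > 0, ∀ s > 0, f s ≤ K * s ^ b := by
  have hbdd : IsBoundedUnder (· ≤ ·) atTop (fun s => logb s (f s)) :=
    isBoundedUnder_of_eventually_le (a := 0) <| by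
      filter_upwards [eventually_gt_atTop 1] with s hs
      exact logb_nonpos hs (hf0 s) (hf1 s)
  obtain ⟨M, hM⟩ := eventually_atTop.1
    ((eventually_lt_of_limsup_lt (hf.trans_lt hLb) hbdd).and (eventually_gt_atTop 1))
  have hM1 : 1 < M := (hM M le_rfl).2
  refine ⟨M ^ (-b), by positivity, fun s hs => ?_⟩
  rcases le_or_gt M s with hMs | hsM
  · obtain ⟨hlt, hs1⟩ := hM s hMs
    rcases (hf0 s).eq_or_lt with h0 | hpos
    · rw [← h0]; positivity
    calc f s ≤ s ^ b := ((logb_lt_iff_lt_rpow hs1 hpos).1 hlt).le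
      _ ≤ M ^ (-b) * s ^ b :=
        le_mul_of_one_le_left (by positivity) (one_le_rpow hM1.le (by linarith))
  · calc f s ≤ 1 := hf1 s
      _ ≤ (s / M) ^ b :=
        one_le_rpow_of_pos_of_le_one_of_nonpos (by positivity)
          ((div_le_one (by linarith)).2 hsM.le) hb
      _ = M ^ (-b) * s ^ b := by
        rw [div_rpow hs.le (by linarith), rpow_neg (by linarith), div_eq_inv_mul]

end Exponents

lemma lt_or_lt_or_exists_of_pow_lt_mul {x y u : ℝ} {n : ℕ} (hy : 0 < y) (hu : 1 < u)
    (hxy : u ^ n < x * y) :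
    u ^ n < x ∨ u ^ n < y ∨ ∃ i < n, u ^ n / u ^ (i + 1) < x ∧ u ^ i < y := by
  have hx : 0 < x := pos_of_mul_pos_left ((pow_pos (by linarith) n).trans hxy) hy.le
  rcases le_or_gt y 1 with hy1 | hy1
  · exact Or.inl (hxy.trans_le (mul_le_of_le_one_right hx.le hy1))
  rcases lt_or_ge (u ^ n) y with hyn | hyn
  · exact Or.inr (Or.inl hyn)
  classical
  have hex : ∃ k, y ≤ u ^ k := ⟨n, hyn⟩
  obtain ⟨i, hi⟩ : ∃ i, Nat.find hex = i + 1 :=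
    Nat.exists_eq_succ_of_ne_zero fun h => by
      have := Nat.find_spec hex
      rw [h, pow_zero] at this
      linarith
  have hle : y ≤ u ^ (i + 1) := hi ▸ Nat.find_spec hex
  refine Or.inr (Or.inr ⟨i, ?_, ?_, lt_of_not_ge (Nat.find_min hex (by omega))⟩)
  · have := Nat.find_min' hex hyn
    omega
  · calc u ^ n / u ^ (i + 1) ≤ u ^ n / y := div_le_div_of_nonneg_left (by positivity) hy hle
      _ < x := (div_lt_iff₀ hy).2 hxy

section Tails

variable {Ω : Type*} [MeasurableSpace Ω] {P : Measure Ω} {X Y : Ω → ℝ}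

lemma measureReal_lt_inter_lt_eq_mul (hindep : IndepFun X Y P) (a b : ℝ) :
    P.real ({ω | a < X ω} ∩ {ω | b < Y ω}) = P.real {ω | a < X ω} * P.real {ω | b < Y ω} := by
  simp only [measureReal_def, ← ENNReal.toReal_mul]
  exact congrArg _ (hindep.measure_inter_preimage_eq_mul _ _ measurableSet_Ioi measurableSet_Ioi)

lemma exists_pos_measureReal_lt [IsFiniteMeasure P] [NeZero P] (hYpos : ∀ ω, 0 < Y ω) :
    ∃ c > 0, 0 < P.real {ω | c < Y ω} := by
  have hcover : ⋃ n : ℕ, {ω | 1 / ((n : ℝ) + 1) < Y ω} = univ :=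
    eq_univ_of_forall fun ω => mem_iUnion.2 (exists_nat_one_div_lt (hYpos ω))
  obtain ⟨n, hn⟩ := exists_measure_pos_of_not_measure_iUnion_null
    (hcover ▸ Measure.measure_univ_ne_zero.2 (NeZero.ne P))
  exact ⟨1 / ((n : ℝ) + 1), by positivity, ENNReal.toReal_pos hn.ne' (measure_ne_top _ _)⟩

lemma measureReal_pow_lt_mul_le_sum [IsFiniteMeasure P] (hYpos : ∀ ω, 0 < Y ω)
    (hindep : IndepFun X Y P) {u : ℝ} (hu : 1 < u) (n : ℕ) :
    P.real {ω | u ^ n < X ω * Y ω} ≤ P.real {ω | u ^ n < X ω} + P.real {ω | u ^ n < Y ω} +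
      ∑ i ∈ Finset.range n,
        P.real {ω | u ^ n / u ^ (i + 1) < X ω} * P.real {ω | u ^ i < Y ω} := by
  calc P.real {ω | u ^ n < X ω * Y ω}
      ≤ P.real ({ω | u ^ n < X ω} ∪ {ω | u ^ n < Y ω} ∪
          ⋃ i ∈ Finset.range n, {ω | u ^ n / u ^ (i + 1) < X ω} ∩ {ω | u ^ i < Y ω}) := by
        refine measureReal_mono fun ω hω => ?_
        rcases lt_or_lt_or_exists_of_pow_lt_mul (hYpos ω) hu hω with hX | hY | ⟨i, hi, hX, hY⟩
        · exact Or.inl (Or.inl hX)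
        · exact Or.inl (Or.inr hY)
        · exact Or.inr (mem_biUnion (Finset.mem_range.2 hi) ⟨hX, hY⟩)
    _ ≤ _ := by
        refine (measureReal_union_le _ _).trans (add_le_add (measureReal_union_le _ _) ?_)
        exact (measureReal_biUnion_finset_le _ _).trans_eq
          (Finset.sum_congr rfl fun i _ => measureReal_lt_inter_lt_eq_mul hindep _ _)

lemma measureReal_lt_mul_le_mul_rpow [IsFiniteMeasure P] (hYpos : ∀ ω, 0 < Y ω)
    (hindep : IndepFun X Y P) {K β : ℝ} (hβ : 0 ≤ β)
    (hX : ∀ s > 0, P.real {ω | s < X ω} ≤ K * s ^ (-β))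
    (hY : ∀ s > 0, P.real {ω | s < Y ω} ≤ K * s ^ (-β)) {n : ℕ} (hn : n ≠ 0) {t : ℝ} (ht : 1 < t) :
    P.real {ω | t < X ω * Y ω} ≤ (2 * K + n * K ^ 2) * t ^ (-β * (1 - 1 / n)) := by
  have hK : 0 ≤ K := by simpa using measureReal_nonneg.trans (hX 1 one_pos)
  set u := t ^ ((n : ℝ)⁻¹)
  have hu : 1 < u := one_lt_rpow ht (by positivity)
  have hut : u ^ n = t := rpow_inv_natCast_pow (by linarith) hn
  have hv : 0 < u ^ n / u := by positivity
  have hvt : (u ^ n / u) ^ (-β) = t ^ (-β * (1 - 1 / n)) := by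
    rw [hut, show t / u = t ^ (1 - 1 / (n : ℝ)) by rw [rpow_sub (by linarith), rpow_one, one_div],
      ← rpow_mul (by linarith), mul_comm]
  have hedge : ∀ Z : Ω → ℝ, (∀ s > 0, P.real {ω | s < Z ω} ≤ K * s ^ (-β)) →
      P.real {ω | u ^ n < Z ω} ≤ K * (u ^ n / u) ^ (-β) := fun Z hZ =>
    (hZ _ (by positivity)).trans <| mul_le_mul_of_nonneg_left
      (rpow_le_rpow_of_nonpos hv (div_le_self (by positivity) hu.le) (by linarith)) hK
  have hterm : ∀ i : ℕ, P.real {ω | u ^ n / u ^ (i + 1) < X ω} * P.real {ω | u ^ i < Y ω} ≤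
      K ^ 2 * (u ^ n / u) ^ (-β) := fun i =>
    calc _ ≤ K * (u ^ n / u ^ (i + 1)) ^ (-β) * (K * (u ^ i) ^ (-β)) :=
          mul_le_mul (hX _ (by positivity)) (hY _ (by positivity)) measureReal_nonneg
            (by positivity)
      _ = K ^ 2 * (u ^ n / u ^ (i + 1) * u ^ i) ^ (-β) := by
          rw [mul_rpow (by positivity) (by positivity)]; ring
      _ = K ^ 2 * (u ^ n / u) ^ (-β) := by
          rw [pow_succ u i]
          congr 2
          field_simp
  calc P.real {ω | t < X ω * Y ω} = P.real {ω | u ^ n < X ω * Y ω} := by rw [hut]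
    _ ≤ K * (u ^ n / u) ^ (-β) + K * (u ^ n / u) ^ (-β) +
          ∑ _i ∈ Finset.range n, K ^ 2 * (u ^ n / u) ^ (-β) := by
        refine (measureReal_pow_lt_mul_le_sum hYpos hindep hu n).trans ?_
        exact add_le_add (add_le_add (hedge X hX) (hedge Y hY))
          (Finset.sum_le_sum fun i _ => hterm i)
    _ = (2 * K + n * K ^ 2) * t ^ (-β * (1 - 1 / n)) := by
        rw [Finset.sum_const, Finset.card_range, nsmul_eq_mul, hvt]; ring

lemma exists_mul_rpow_le_measureReal_lt_mul [IsFiniteMeasure P] [NeZero P]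
    (hYpos : ∀ ω, 0 < Y ω) (hindep : IndepFun X Y P) {L a : ℝ}
    (hX : Tendsto (fun s => logb s (P.real {ω | s < X ω})) atTop (𝓝 L)) (hL : L < 0)
    (ha : a < L) :
    ∃ C > 0, ∀ᶠ t in atTop, C * t ^ a ≤ P.real {ω | t < X ω * Y ω} := by
  obtain ⟨c, hc, hYc⟩ := exists_pos_measureReal_lt (P := P) hYpos
  refine ⟨P.real {ω | c < Y ω} * c ^ (-a), by positivity, ?_⟩
  filter_upwards [(tendsto_id.atTop_div_const hc).eventually
      (eventually_rpow_le_of_tendsto_logb (fun _ => measureReal_nonneg) hX hL ha),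
    eventually_gt_atTop 0] with t hXt ht
  calc P.real {ω | c < Y ω} * c ^ (-a) * t ^ a = (t / c) ^ a * P.real {ω | c < Y ω} := by
        rw [div_rpow ht.le hc.le, rpow_neg hc.le]; ring
    _ ≤ P.real {ω | t / c < X ω} * P.real {ω | c < Y ω} := by gcongr; exact hXt
    _ = P.real ({ω | t / c < X ω} ∩ {ω | c < Y ω}) :=
        (measureReal_lt_inter_lt_eq_mul hindep _ _).symm
    _ ≤ P.real {ω | t < X ω * Y ω} := measureReal_mono fun ω ⟨hx, hy⟩ => by
        simpa [div_mul_cancel₀ t hc.ne'] using mul_lt_mul'' hx hy (by positivity) hc.le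

lemma exists_measureReal_lt_mul_le_mul_rpow_of_limsup [IsProbabilityMeasure P]
    (hYpos : ∀ ω, 0 < Y ω) (hindep : IndepFun X Y P) {α : ℝ} (hα : 0 < α)
    (hX : limsup (fun s => logb s (P.real {ω | s < X ω})) atTop ≤ -α)
    (hY : limsup (fun s => logb s (P.real {ω | s < Y ω})) atTop ≤ -α) {b : ℝ} (hb : -α < b) :
    ∃ C > 0, ∀ᶠ t in atTop, P.real {ω | t < X ω * Y ω} ≤ C * t ^ b := by
  obtain ⟨β, hβb, hβα⟩ : ∃ β, max (-b) 0 < β ∧ β < α := exists_between (max_lt (by linarith) hα)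
  have hβ : 0 < β := (le_max_right _ _).trans_lt hβb
  have hexp : Tendsto (fun n : ℕ => -β * (1 - 1 / (n : ℝ))) atTop (𝓝 (-β)) := by
    simpa using (tendsto_one_div_atTop_nhds_zero_nat.const_sub 1).const_mul (-β)
  have hβb' : -β < b := by linarith [le_max_left (-b) 0]
  obtain ⟨n, hnb, hn⟩ := ((hexp.eventually (gt_mem_nhds hβb')).and (eventually_ne_atTop 0)).exists
  obtain ⟨KX, hKX, hXK⟩ := exists_le_mul_rpow_of_limsup_logb_le (fun _ => measureReal_nonneg)
    (fun _ => measureReal_le_one) hX (neg_lt_neg hβα) (by linarith)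
  obtain ⟨KY, hKY, hYK⟩ := exists_le_mul_rpow_of_limsup_logb_le (fun _ => measureReal_nonneg)
    (fun _ => measureReal_le_one) hY (neg_lt_neg hβα) (by linarith)
  set K := max KX KY
  have hK : 0 < K := lt_max_of_lt_left hKX
  refine ⟨2 * K + n * K ^ 2, by positivity, ?_⟩
  filter_upwards [eventually_gt_atTop 1] with t ht
  calc P.real {ω | t < X ω * Y ω} ≤ (2 * K + n * K ^ 2) * t ^ (-β * (1 - 1 / n)) :=
        measureReal_lt_mul_le_mul_rpow hYpos hindep hβ.le
          (fun s hs => (hXK s hs).trans (by gcongr; exact le_max_left _ _))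
          (fun s hs => (hYK s hs).trans (by gcongr; exact le_max_right _ _)) hn ht
    _ ≤ (2 * K + n * K ^ 2) * t ^ b := by gcongr; exact ht.le

end Tails

theorem product_of_heavy_tails_general
    {Ω : Type*} [MeasurableSpace Ω] (P : Measure Ω) [IsProbabilityMeasure P]
    (X Y : Ω → ℝ)
    (hYpos : ∀ ω, 0 < Y ω)
    (hindep : IndepFun X Y P)
    (α : ℝ) (hα : 0 < α)
    (hX : Tendsto (fun t : ℝ => Real.log (P {ω | X ω > t}).toReal / Real.log t)
      atTop (nhds (-α)))
    (hY : limsup (fun t : ℝ => Real.log (P {ω | Y ω > t}).toReal / Real.log t) atTop ≤ -α) :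
    Tendsto (fun t : ℝ => Real.log (P {ω | X ω * Y ω > t}).toReal / Real.log t)
      atTop (nhds (-α)) := by
  simp only [log_div_log, gt_iff_lt, ← measureReal_def] at hX hY ⊢
  exact tendsto_logb_of_rpow_bounds
    (fun a ha => exists_mul_rpow_le_measureReal_lt_mul hYpos hindep hX (neg_neg_of_pos hα) ha)
    (fun b hb => exists_measureReal_lt_mul_le_mul_rpow_of_limsup hYpos hindep hα
      hX.limsup_eq.le hY hb)

/-- **Lemma (product of heavy-tailed independent variables).**
Let `X` and `Y` be two independent strictly positive random variables and `α > 0`.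
If `P(X > t) = t^{-α+o(1)}` and `P(Y > t) ≤ t^{-α+o(1)}` as `t → ∞`, then
`P(XY > t) = t^{-α+o(1)}` as `t → ∞`. -/
theorem product_of_heavy_tails
    {Ω : Type*} [MeasurableSpace Ω] (P : Measure Ω) [IsProbabilityMeasure P]
    (X Y : Ω → ℝ) (hXmeas : Measurable X) (hYmeas : Measurable Y)
    (hXpos : ∀ ω, 0 < X ω) (hYpos : ∀ ω, 0 < Y ω)
    (hindep : IndepFun X Y P)
    (α : ℝ) (hα : 0 < α)
    (hX : Tendsto (fun t : ℝ => Real.log (P {ω | X ω > t}).toReal / Real.log t)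
      atTop (nhds (-α)))
    (hY : limsup (fun t : ℝ => Real.log (P {ω | Y ω > t}).toReal / Real.log t) atTop ≤ -α) :
    Tendsto (fun t : ℝ => Real.log (P {ω | X ω * Y ω > t}).toReal / Real.log t)
      atTop (nhds (-α)) :=
  product_of_heavy_tails_general P X Y hYpos hindep α hα hX hY
end

section
/- Let c_{−1} and c_0 be i.i.d. strictly positive random variables with lim_{M→∞} log ℙ(c_0 > M)/log M = −α_∞ and lim_{ε→0+} log ℙ(c_0 < ε)/log ε = α_0, where α_∞, α_0 ∈ (0,∞] and ᾱ := min(α_0, α_∞) < ∞. Then for any δ > 0 the ratio ρ_0 := e^{−2δ} c_{−1}/c_0 satisfies lim_{t→∞} log ℙ(ρ_0 > t)/log t = −ᾱ. -/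
/-!
Write `X = c₋₁`, `Y = c₀`. The hypotheses say that for large `t` both `P(X > t)` and
`P(Y < 1 / t)` lie between `t ^ (-b)` and `t ^ (-β)`, whenever `β < α∞ < b`, resp. `β < α₀ < b`.
Lower bound: `P(X / Y > t) ≥ P(X > a) P(Y < a / t)` and `P(X / Y > t) ≥ P(X > t ε) P(Y < ε)`.
Upper bound, for `β < ᾱ`: cut `{X > t Y}` along the `n` layers `t ^ (-(k+1)/n) ≤ Y < t ^ (-k/n)`;
on each, independence gives `P(Y < t ^ (-k/n)) P(X > t ^ (1 - (k+1)/n)) ≤ C t ^ (-(1 - 1/n) β)`,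
and `n` is arbitrary. The factor `e^{-2δ}` only rescales `t`, which leaves `log P / log t`
with the same limit.
-/

open MeasureTheory Filter ProbabilityTheory

section LogRatio

variable {f : ℝ → ℝ} {a : EReal}

theorem eventually_le_rpow_of_tendsto_log_div_log
    (hf : Tendsto (fun M ↦ ((Real.log (f M) / Real.log M : ℝ) : EReal)) atTop (nhds (-a)))
    {β : ℝ} (hβ : (β : EReal) < a) :
    ∀ᶠ M in atTop, f M ≤ M ^ (-β) := by
  have hlt : -a < ((-β : ℝ) : EReal) := by
    rw [EReal.coe_neg]; exact EReal.neg_lt_neg_iff.mpr hβ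
  filter_upwards [hf.eventually_lt_const hlt, eventually_gt_atTop 1] with M hM hM1
  have hlog : Real.log (f M) < -β * Real.log M :=
    (div_lt_iff₀ (Real.log_pos hM1)).mp (EReal.coe_lt_coe_iff.mp hM)
  calc f M ≤ Real.exp (Real.log (f M)) := Real.le_exp_log _
    _ ≤ M ^ (-β) := by
      rw [Real.rpow_def_of_pos (by linarith), mul_comm]; exact Real.exp_le_exp.mpr hlog.le

theorem eventually_pos_of_tendsto_log_div_log
    (hf : Tendsto (fun M ↦ ((Real.log (f M) / Real.log M : ℝ) : EReal)) atTop (nhds (-a)))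
    (hf0 : ∀ M, 0 ≤ f M) (ha : 0 < a) : ∀ᶠ M in atTop, 0 < f M := by
  have hlt : -a < ((0 : ℝ) : EReal) := by
    rw [EReal.coe_zero, EReal.neg_lt_zero]; exact ha
  filter_upwards [hf.eventually_lt_const hlt] with M hM
  refine (hf0 M).lt_of_ne fun h ↦ ?_
  -- `log 0 = 0` would make the ratio vanish
  simp [← h] at hM

theorem eventually_rpow_le_of_tendsto_log_div_log
    (hf : Tendsto (fun M ↦ ((Real.log (f M) / Real.log M : ℝ) : EReal)) atTop (nhds (-a)))
    (hf0 : ∀ M, 0 ≤ f M) (ha : 0 < a) {b : ℝ} (hb : a < b) :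
    ∀ᶠ M in atTop, M ^ (-b) ≤ f M := by
  have hlt : ((-b : ℝ) : EReal) < -a := by
    rw [EReal.coe_neg]; exact EReal.neg_lt_neg_iff.mpr hb
  filter_upwards [hf.eventually_const_lt hlt, eventually_pos_of_tendsto_log_div_log hf hf0 ha,
    eventually_gt_atTop 1] with M hM hfM hM1
  have hlog : -b * Real.log M < Real.log (f M) :=
    (lt_div_iff₀ (Real.log_pos hM1)).mp (EReal.coe_lt_coe_iff.mp hM)
  rw [Real.rpow_def_of_pos (by linarith), mul_comm, ← Real.exp_log hfM]
  exact Real.exp_le_exp.mpr hlog.le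

theorem tendsto_log_div_log_comp_inv {g : ℝ → ℝ}
    (hg : Tendsto (fun ε ↦ ((Real.log (g ε) / Real.log ε : ℝ) : EReal))
      (nhdsWithin 0 (Set.Ioi 0)) (nhds a)) :
    Tendsto (fun M ↦ ((Real.log (g M⁻¹) / Real.log M : ℝ) : EReal)) atTop (nhds (-a)) := by
  have h := (hg.comp tendsto_inv_atTop_nhdsGT_zero).neg
  refine h.congr fun M ↦ ?_
  simp [Real.log_inv, div_neg]

end LogRatio

theorem log_mul_rpow_div_log {C t : ℝ} (hC : 0 < C) (ht : 1 < t) (γ : ℝ) :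
    Real.log (C * t ^ (-γ)) / Real.log t = Real.log C / Real.log t - γ := by
  have hlog : Real.log t ≠ 0 := (Real.log_pos ht).ne'
  rw [Real.log_mul hC.ne' (by positivity), Real.log_rpow (by linarith)]
  field_simp
  ring

theorem tendsto_log_div_log_of_rpow_bounds {p : ℝ → ℝ} {A : ℝ} (hA : 0 < A)
    (hup : ∀ γ, 0 < γ → γ < A → ∃ C, 0 < C ∧ ∀ᶠ t in atTop, p t ≤ C * t ^ (-γ))
    (hlow : ∀ b, A < b → ∃ c, 0 < c ∧ ∀ᶠ t in atTop, c * t ^ (-b) ≤ p t) :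
    Tendsto (fun t ↦ Real.log (p t) / Real.log t) atTop (nhds (-A)) := by
  have hlogc (c x : ℝ) : Tendsto (fun t ↦ Real.log c / Real.log t - x) atTop (nhds (-x)) := by
    simpa using (tendsto_const_nhds.div_atTop Real.tendsto_log_atTop).sub_const x
  refine tendsto_order.2 ⟨fun y hy ↦ ?_, fun y hy ↦ ?_⟩
  · obtain ⟨b, hAb, hby⟩ := exists_between (lt_neg_of_lt_neg hy)
    obtain ⟨c, hc, hcp⟩ := hlow b hAb
    filter_upwards [hcp, eventually_gt_atTop 1, (hlogc c b).eventually_const_lt (lt_neg.mp hby)]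
      with t hpt ht hyt
    calc y < Real.log c / Real.log t - b := hyt
      _ = Real.log (c * t ^ (-b)) / Real.log t := (log_mul_rpow_div_log hc ht b).symm
      _ ≤ Real.log (p t) / Real.log t := by
        gcongr
        exact Real.log_nonneg ht.le
  · obtain ⟨γ, hγ, hγA⟩ := exists_between (max_lt (neg_lt.mp hy) hA)
    obtain ⟨C, hC, hCp⟩ := hup γ ((le_max_right _ _).trans_lt hγ) hγA
    obtain ⟨c, hc, hcp⟩ := hlow (A + 1) (by linarith)
    filter_upwards [hCp, hcp, eventually_gt_atTop 1,
      (hlogc C γ).eventually_lt_const (neg_lt.mp ((le_max_left _ _).trans_lt hγ))]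
      with t hpt hpt' ht hyt
    have hp : 0 < p t :=
      lt_of_lt_of_le (mul_pos hc (Real.rpow_pos_of_pos (zero_lt_one.trans ht) _)) hpt'
    calc Real.log (p t) / Real.log t ≤ Real.log (C * t ^ (-γ)) / Real.log t := by
          gcongr
          exact Real.log_nonneg ht.le
      _ = Real.log C / Real.log t - γ := log_mul_rpow_div_log hC ht γ
      _ < y := hyt

theorem tendsto_log_div_log_comp_const_mul {q : ℝ → ℝ} {L : ℝ}
    (hq : Tendsto (fun s ↦ Real.log (q s) / Real.log s) atTop (nhds L)) {c : ℝ} (hc : 0 < c) :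
    Tendsto (fun t ↦ Real.log (q (c * t)) / Real.log t) atTop (nhds L) := by
  have hratio : Tendsto (fun t ↦ Real.log c / Real.log t + 1) atTop (nhds 1) := by
    simpa using (tendsto_const_nhds.div_atTop Real.tendsto_log_atTop).add_const (1 : ℝ)
  have h := (hq.comp (tendsto_id.const_mul_atTop hc)).mul hratio
  rw [mul_one] at h
  refine h.congr' ?_
  filter_upwards [eventually_gt_atTop 1, eventually_gt_atTop c⁻¹] with t ht htc
  have hct : 0 < Real.log (c * t) := Real.log_pos (by rwa [inv_lt_iff_one_lt_mul₀' hc] at htc)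
  have hlogt : Real.log t ≠ 0 := (Real.log_pos ht).ne'
  simp only [Function.comp_apply, id]
  rw [Real.log_mul hc.ne' (by linarith)] at hct ⊢
  field_simp

theorem exists_le_and_lt_of_le_of_lt {α : Type*} [LinearOrder α] {u : ℕ → α} {y : α} {n : ℕ}
    (hn : u n ≤ y) (h0 : y < u 0) : ∃ k < n, u (k + 1) ≤ y ∧ y < u k := by
  induction n with
  | zero => exact absurd hn (not_le.mpr h0)
  | succ n ih =>
    rcases le_or_gt (u n) y with h | h
    · obtain ⟨k, hk, hky⟩ := ih h
      exact ⟨k, by omega, hky⟩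
    · exact ⟨n, n.lt_succ_self, hn, h⟩

theorem exists_forall_le_mul_rpow_of_eventually {f : ℝ → ℝ} (hf : ∀ x, f x ≤ 1) {β : ℝ} (hβ : 0 ≤ β)
    (h : ∀ᶠ x in atTop, f x ≤ x ^ (-β)) : ∃ C, 1 ≤ C ∧ ∀ x, 0 < x → f x ≤ C * x ^ (-β) := by
  obtain ⟨M, hM⟩ := eventually_atTop.mp (h.and (eventually_ge_atTop 1))
  have hM1 : 1 ≤ M := (hM M le_rfl).2
  refine ⟨M ^ β, Real.one_le_rpow hM1 hβ, fun x hx ↦ ?_⟩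
  rcases le_total M x with hMx | hxM
  · calc f x ≤ x ^ (-β) := (hM x hMx).1
      _ ≤ M ^ β * x ^ (-β) := le_mul_of_one_le_left (by positivity) (Real.one_le_rpow hM1 hβ)
  · calc f x ≤ 1 := hf x
      _ = M ^ β * M ^ (-β) := by
        rw [Real.rpow_neg (zero_le_one.trans hM1), mul_inv_cancel₀ (by positivity : M ^ β ≠ 0)]
      _ ≤ M ^ β * x ^ (-β) := mul_le_mul_of_nonneg_left
        (Real.rpow_le_rpow_of_nonpos hx hxM (neg_nonpos.mpr hβ)) (by positivity)

theorem setOf_lt_div_subset {Ω : Type*} {X Y : Ω → ℝ} (hY : ∀ ω, 0 < Y ω) {t : ℝ} (ht : 0 ≤ t)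
    {u : ℕ → ℝ} (hu : u 0 = 1) (n : ℕ) :
    {ω | t < X ω / Y ω} ⊆ ({ω | t < X ω} ∪ {ω | Y ω < u n}) ∪
      ⋃ k ∈ Finset.range n, {ω | t * u (k + 1) < X ω} ∩ {ω | Y ω < u k} := by
  intro ω hω
  have htY : t * Y ω < X ω := (lt_div_iff₀ (hY ω)).mp hω
  rcases le_or_gt 1 (Y ω) with h1 | h1
  · exact Or.inl (Or.inl ((le_mul_of_one_le_right ht h1).trans_lt htY))
  rcases lt_or_ge (Y ω) (u n) with hn | hn
  · exact Or.inl (Or.inr hn)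
  obtain ⟨k, hk, hku, hkY⟩ := exists_le_and_lt_of_le_of_lt hn (hu ▸ h1)
  refine Or.inr (Set.mem_biUnion (Finset.mem_range.mpr hk) ⟨?_, hkY⟩)
  exact lt_of_le_of_lt (mul_le_mul_of_nonneg_left hku ht) htY

section Ratio

variable {Ω : Type*} [MeasurableSpace Ω] {P : Measure Ω} {X Y : Ω → ℝ}

theorem ProbabilityTheory.IndepFun.measureReal_inter_setOf_lt_eq_mul (hXY : IndepFun X Y P)
    (a b : ℝ) :
    P.real ({ω | a < X ω} ∩ {ω | Y ω < b}) = P.real {ω | a < X ω} * P.real {ω | Y ω < b} := by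
  simp only [Measure.real, ← ENNReal.toReal_mul]
  exact congrArg _ (hXY.measure_inter_preimage_eq_mul _ _ measurableSet_Ioi measurableSet_Iio)

theorem ProbabilityTheory.IndepFun.mul_measureReal_le_measureReal_lt_div [IsFiniteMeasure P]
    (hXY : IndepFun X Y P) (hY : ∀ ω, 0 < Y ω) {a ε : ℝ} (ha : 0 ≤ a) :
    P.real {ω | a < X ω} * P.real {ω | Y ω < ε} ≤ P.real {ω | a / ε < X ω / Y ω} := by
  rw [← hXY.measureReal_inter_setOf_lt_eq_mul]
  refine measureReal_mono fun ω ⟨hX, hYε⟩ ↦ ?_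
  calc a / ε ≤ a / Y ω := div_le_div_of_nonneg_left ha (hY ω) hYε.le
    _ < X ω / Y ω := div_lt_div_of_pos_right hX (hY ω)

theorem measureReal_lt_div_le_add_sum [IsFiniteMeasure P] (hY : ∀ ω, 0 < Y ω) {t : ℝ}
    (ht : 0 ≤ t) {u : ℕ → ℝ} (hu : u 0 = 1) (n : ℕ) :
    P.real {ω | t < X ω / Y ω} ≤ (P.real {ω | t < X ω} + P.real {ω | Y ω < u n}) +
      ∑ k ∈ Finset.range n, P.real ({ω | t * u (k + 1) < X ω} ∩ {ω | Y ω < u k}) :=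
  (measureReal_mono (setOf_lt_div_subset hY ht hu n)).trans <| (measureReal_union_le _ _).trans
    (add_le_add (measureReal_union_le _ _) (measureReal_biUnion_finset_le _ _))

theorem ProbabilityTheory.IndepFun.measureReal_lt_div_le [IsProbabilityMeasure P]
    (hXY : IndepFun X Y P) (hY : ∀ ω, 0 < Y ω) {β CX CY : ℝ} (hβ : 0 ≤ β) (hCX : 1 ≤ CX)
    (hCY : 1 ≤ CY) (hX : ∀ v, 0 < v → P.real {ω | v < X ω} ≤ CX * v ^ (-β))
    (hYε : ∀ ε, 0 < ε → P.real {ω | Y ω < ε} ≤ CY * ε ^ β) {n : ℕ} (hn : 0 < n) {t : ℝ}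
    (ht : 1 ≤ t) :
    P.real {ω | t < X ω / Y ω} ≤ (n + 2) * (CX * CY * t ^ (-(β - β / n))) := by
  have ht0 : 0 < t := zero_lt_one.trans_le ht
  set K := CX * CY * t ^ (-(β - β / n))
  set u : ℕ → ℝ := fun k ↦ t ^ (-((k : ℝ) / n))
  have htβ : t ^ (-β) ≤ t ^ (-(β - β / n)) :=
    Real.rpow_le_rpow_of_exponent_le ht (neg_le_neg (sub_le_self _ (by positivity)))
  have hfirst : P.real {ω | t < X ω} ≤ K :=
    calc _ ≤ CX * t ^ (-β) := hX t ht0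
      _ ≤ CX * (CY * t ^ (-(β - β / n))) := by
        gcongr; exact htβ.trans (le_mul_of_one_le_left (by positivity) hCY)
      _ = K := (mul_assoc _ _ _).symm
  have hlast : P.real {ω | Y ω < u n} ≤ K :=
    calc _ ≤ CY * u n ^ β := hYε _ (by positivity)
      _ = CY * t ^ (-β) := by
        rw [← Real.rpow_mul ht0.le, div_self (by positivity), neg_one_mul]
      _ ≤ CY * (CX * t ^ (-(β - β / n))) := by
        gcongr; exact htβ.trans (le_mul_of_one_le_left (by positivity) hCX)
      _ = K := by ring
  have hlayer : ∀ k < n, P.real ({ω | t * u (k + 1) < X ω} ∩ {ω | Y ω < u k}) ≤ K := by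
    intro k _
    have hexp : (t * u (k + 1)) ^ (-β) * u k ^ β = t ^ (-(β - β / n)) := by
      simp only [u]
      rw [Real.mul_rpow ht0.le (by positivity), ← Real.rpow_mul ht0.le, ← Real.rpow_mul ht0.le,
        ← Real.rpow_add ht0, ← Real.rpow_add ht0]
      congr 1
      push_cast
      field_simp
      ring
    rw [hXY.measureReal_inter_setOf_lt_eq_mul]
    calc _ ≤ (CX * (t * u (k + 1)) ^ (-β)) * (CY * u k ^ β) :=
          mul_le_mul (hX _ (by positivity)) (hYε _ (by positivity)) measureReal_nonneg
            (by positivity)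
      _ = CX * CY * ((t * u (k + 1)) ^ (-β) * u k ^ β) := by ring
      _ = K := by rw [hexp]
  calc P.real {ω | t < X ω / Y ω}
      ≤ (P.real {ω | t < X ω} + P.real {ω | Y ω < u n}) +
          ∑ k ∈ Finset.range n, P.real ({ω | t * u (k + 1) < X ω} ∩ {ω | Y ω < u k}) :=
        measureReal_lt_div_le_add_sum hY ht0.le (by simp [u]) n
    _ ≤ (K + K) + ∑ _k ∈ Finset.range n, K :=
        add_le_add (add_le_add hfirst hlast)
          (Finset.sum_le_sum fun k hk ↦ hlayer k (Finset.mem_range.mp hk))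
    _ = (n + 2) * K := by simp; ring

theorem ProbabilityTheory.IndepFun.exists_measureReal_lt_div_le_mul_rpow [IsProbabilityMeasure P]
    (hXY : IndepFun X Y P) (hY : ∀ ω, 0 < Y ω) {β γ : ℝ} (hγ : 0 < γ) (hγβ : γ < β)
    (hX : ∀ᶠ v in atTop, P.real {ω | v < X ω} ≤ v ^ (-β))
    (hYinv : ∀ᶠ M in atTop, P.real {ω | Y ω < M⁻¹} ≤ M ^ (-β)) :
    ∃ C, 0 < C ∧ ∀ᶠ t in atTop, P.real {ω | t < X ω / Y ω} ≤ C * t ^ (-γ) := by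
  have hβ : 0 ≤ β := (hγ.trans hγβ).le
  obtain ⟨CX, hCX, hXC⟩ :=
    exists_forall_le_mul_rpow_of_eventually (fun _ ↦ measureReal_le_one) hβ hX
  obtain ⟨CY, hCY, hYC⟩ :=
    exists_forall_le_mul_rpow_of_eventually (fun _ ↦ measureReal_le_one) hβ hYinv
  have hYε (ε : ℝ) (hε : 0 < ε) : P.real {ω | Y ω < ε} ≤ CY * ε ^ β := by
    simpa [Real.inv_rpow hε.le, Real.rpow_neg hε.le] using hYC ε⁻¹ (inv_pos.mpr hε)
  obtain ⟨n, hn⟩ := exists_nat_gt (β / (β - γ))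
  have hn0 : 0 < n := by
    have : 0 ≤ β / (β - γ) := div_nonneg hβ (sub_nonneg.mpr hγβ.le)
    exact_mod_cast this.trans_lt hn
  have hγn : γ ≤ β - β / n := by
    have : β / n < β - γ :=
      (div_lt_iff₀' (Nat.cast_pos.mpr hn0)).mpr ((div_lt_iff₀ (sub_pos.mpr hγβ)).mp hn)
    linarith
  refine ⟨(n + 2) * (CX * CY), by positivity, ?_⟩
  filter_upwards [eventually_ge_atTop 1] with t ht
  calc _ ≤ (n + 2) * (CX * CY * t ^ (-(β - β / n))) :=
        hXY.measureReal_lt_div_le hY hβ hCX hCY hXC hYε hn0 ht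
    _ ≤ (n + 2) * (CX * CY) * t ^ (-γ) := by
        rw [← mul_assoc]
        gcongr

theorem ProbabilityTheory.IndepFun.exists_mul_rpow_le_measureReal_lt_div_of_lower_tail
    [IsFiniteMeasure P] (hXY : IndepFun X Y P) (hY : ∀ ω, 0 < Y ω) {b : ℝ}
    (hXpos : ∀ᶠ v in atTop, 0 < P.real {ω | v < X ω})
    (hYinv : ∀ᶠ M in atTop, M ^ (-b) ≤ P.real {ω | Y ω < M⁻¹}) :
    ∃ c, 0 < c ∧ ∀ᶠ t in atTop, c * t ^ (-b) ≤ P.real {ω | t < X ω / Y ω} := by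
  obtain ⟨a, hXa, ha⟩ := (hXpos.and (eventually_gt_atTop 0)).exists
  refine ⟨P.real {ω | a < X ω} * a ^ b, by positivity, ?_⟩
  filter_upwards [(tendsto_id.atTop_div_const ha).eventually hYinv, eventually_gt_atTop 0]
    with t hYt ht
  calc P.real {ω | a < X ω} * a ^ b * t ^ (-b)
      = P.real {ω | a < X ω} * (t / a) ^ (-b) := by
        rw [Real.div_rpow ht.le ha.le, Real.rpow_neg ha.le, div_inv_eq_mul]; ring
    _ ≤ P.real {ω | a < X ω} * P.real {ω | Y ω < (t / a)⁻¹} := by gcongr; exact hYt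
    _ ≤ P.real {ω | a / (t / a)⁻¹ < X ω / Y ω} :=
        hXY.mul_measureReal_le_measureReal_lt_div hY ha.le
    _ = P.real {ω | t < X ω / Y ω} := by rw [inv_div, div_div_cancel₀ ha.ne']

theorem ProbabilityTheory.IndepFun.exists_mul_rpow_le_measureReal_lt_div_of_upper_tail
    [IsFiniteMeasure P] (hXY : IndepFun X Y P) (hY : ∀ ω, 0 < Y ω) {b : ℝ}
    (hX : ∀ᶠ v in atTop, v ^ (-b) ≤ P.real {ω | v < X ω})
    (hYpos : ∀ᶠ M in atTop, 0 < P.real {ω | Y ω < M⁻¹}) :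
    ∃ c, 0 < c ∧ ∀ᶠ t in atTop, c * t ^ (-b) ≤ P.real {ω | t < X ω / Y ω} := by
  obtain ⟨M, hYM, hM⟩ := (hYpos.and (eventually_gt_atTop 0)).exists
  set ε := M⁻¹
  have hε : 0 < ε := inv_pos.mpr hM
  refine ⟨ε ^ (-b) * P.real {ω | Y ω < ε}, by positivity, ?_⟩
  filter_upwards [(tendsto_id.atTop_mul_const hε).eventually hX, eventually_gt_atTop 0]
    with t hXt ht
  calc ε ^ (-b) * P.real {ω | Y ω < ε} * t ^ (-b)
      = (t * ε) ^ (-b) * P.real {ω | Y ω < ε} := by rw [Real.mul_rpow ht.le hε.le]; ring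
    _ ≤ P.real {ω | t * ε < X ω} * P.real {ω | Y ω < ε} := by gcongr; exact hXt
    _ ≤ P.real {ω | t * ε / ε < X ω / Y ω} :=
        hXY.mul_measureReal_le_measureReal_lt_div hY (by positivity)
    _ = P.real {ω | t < X ω / Y ω} := by rw [mul_div_cancel_right₀ _ hε.ne']

theorem ProbabilityTheory.IndepFun.tendsto_log_measureReal_lt_div_div_log
    [IsProbabilityMeasure P] (hXY : IndepFun X Y P) (hY : ∀ ω, 0 < Y ω) {αX αY : EReal}
    (hαX : 0 < αX) (hαY : 0 < αY) (hfin : min αY αX < ⊤)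
    (hXtail : Tendsto (fun M ↦ ((Real.log (P.real {ω | M < X ω}) / Real.log M : ℝ) : EReal))
      atTop (nhds (-αX)))
    (hYtail : Tendsto (fun M ↦ ((Real.log (P.real {ω | Y ω < M⁻¹}) / Real.log M : ℝ) : EReal))
      atTop (nhds (-αY))) :
    Tendsto (fun t ↦ Real.log (P.real {ω | t < X ω / Y ω}) / Real.log t) atTop
      (nhds (-(min αY αX).toReal)) := by
  have hA : ((min αY αX).toReal : EReal) = min αY αX :=
    EReal.coe_toReal hfin.ne (ne_bot_of_gt (lt_min hαY hαX))
  refine tendsto_log_div_log_of_rpow_bounds (EReal.coe_pos.mp (hA ▸ lt_min hαY hαX))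
    (fun γ hγ hγA ↦ ?_) (fun b hb ↦ ?_)
  · obtain ⟨β, hγβ, hβA⟩ := exists_between hγA
    have hβ : (β : EReal) < min αY αX := hA ▸ EReal.coe_lt_coe_iff.mpr hβA
    exact hXY.exists_measureReal_lt_div_le_mul_rpow hY hγ hγβ
      (eventually_le_rpow_of_tendsto_log_div_log hXtail (hβ.trans_le (min_le_right _ _)))
      (eventually_le_rpow_of_tendsto_log_div_log hYtail (hβ.trans_le (min_le_left _ _)))
  · rcases min_lt_iff.mp (hA ▸ EReal.coe_lt_coe_iff.mpr hb : min αY αX < b) with hbY | hbX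
    · exact hXY.exists_mul_rpow_le_measureReal_lt_div_of_lower_tail hY
        (eventually_pos_of_tendsto_log_div_log hXtail (fun _ ↦ measureReal_nonneg) hαX)
        (eventually_rpow_le_of_tendsto_log_div_log hYtail (fun _ ↦ measureReal_nonneg) hαY hbY)
    · exact hXY.exists_mul_rpow_le_measureReal_lt_div_of_upper_tail hY
        (eventually_rpow_le_of_tendsto_log_div_log hXtail (fun _ ↦ measureReal_nonneg) hαX hbX)
        (eventually_pos_of_tendsto_log_div_log hYtail (fun _ ↦ measureReal_nonneg) hαY)

end Ratio

theorem tail_of_rho_BiRC_general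
    {Ω : Type*} [MeasurableSpace Ω] (P : Measure Ω) [IsProbabilityMeasure P]
    (cNeg cZero : Ω → ℝ) (hpos₂ : ∀ ω, 0 < cZero ω)
    (hindep : IndepFun cNeg cZero P)
    (hident : IdentDistrib cNeg cZero P P)
    (αinf α0 : EReal) (hαinf : 0 < αinf) (hα0 : 0 < α0)
    (hbar : min α0 αinf < ⊤)
    (htail_inf : Tendsto
      (fun M : ℝ => ((Real.log (P {ω | cZero ω > M}).toReal / Real.log M : ℝ) : EReal))
      atTop (nhds (-αinf)))
    (htail_0 : Tendsto
      (fun ε : ℝ => ((Real.log (P {ω | cZero ω < ε}).toReal / Real.log ε : ℝ) : EReal))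
      (nhdsWithin 0 (Set.Ioi 0)) (nhds α0))
    (δ : ℝ) :
    Tendsto
      (fun t : ℝ =>
        Real.log (P {ω | Real.exp (-2 * δ) * cNeg ω / cZero ω > t}).toReal / Real.log t)
      atTop (nhds (-(min α0 αinf).toReal)) := by
  have hX : Tendsto (fun M ↦ ((Real.log (P.real {ω | M < cNeg ω}) / Real.log M : ℝ) : EReal))
      atTop (nhds (-αinf)) := by
    have hsame (M : ℝ) : P.real {ω | M < cNeg ω} = (P {ω | cZero ω > M}).toReal :=
      congrArg ENNReal.toReal (hident.measure_mem_eq measurableSet_Ioi)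
    simpa only [hsame] using htail_inf
  have hq := hindep.tendsto_log_measureReal_lt_div_div_log hpos₂ hαinf hα0 hbar hX
    (tendsto_log_div_log_comp_inv htail_0)
  have hρ (t : ℝ) : {ω | Real.exp (-2 * δ) * cNeg ω / cZero ω > t} =
      {ω | Real.exp (2 * δ) * t < cNeg ω / cZero ω} := by
    ext ω
    simp only [Set.mem_ofPred_eq, gt_iff_lt, mul_div_assoc, neg_mul, Real.exp_neg,
      lt_inv_mul_iff₀ (Real.exp_pos _)]
  simp only [hρ]
  exact tendsto_log_div_log_comp_const_mul hq (Real.exp_pos (2 * δ))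

/-- **Tail of `ρ₀` for the BiRC model.**
Let `c₋₁, c₀` be i.i.d. strictly positive random variables whose tail at `+∞` has
exponent `α∞` and whose tail at `0` has exponent `α₀` (values in `(0,∞]`), with
`ᾱ := min(α₀, α∞) < ∞`. Then for any `δ > 0` the ratio `ρ₀ := e^{-2δ} c₋₁ / c₀`
satisfies `lim_{t→∞} log P(ρ₀ > t) / log t = -ᾱ`. -/
theorem tail_of_rho_BiRC
    {Ω : Type*} [MeasurableSpace Ω] (P : Measure Ω) [IsProbabilityMeasure P]
    (cNeg cZero : Ω → ℝ) (hmeas₁ : Measurable cNeg) (hmeas₂ : Measurable cZero)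
    (hpos₁ : ∀ ω, 0 < cNeg ω) (hpos₂ : ∀ ω, 0 < cZero ω)
    (hindep : IndepFun cNeg cZero P)
    (hident : IdentDistrib cNeg cZero P P)
    (αinf α0 : EReal) (hαinf : 0 < αinf) (hα0 : 0 < α0)
    (hbar : min α0 αinf < ⊤)
    (htail_inf : Tendsto
      (fun M : ℝ => ((Real.log (P {ω | cZero ω > M}).toReal / Real.log M : ℝ) : EReal))
      atTop (nhds (-αinf)))
    (htail_0 : Tendsto
      (fun ε : ℝ => ((Real.log (P {ω | cZero ω < ε}).toReal / Real.log ε : ℝ) : EReal))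
      (nhdsWithin 0 (Set.Ioi 0)) (nhds α0))
    (δ : ℝ) (hδ : 0 < δ) :
    Tendsto
      (fun t : ℝ =>
        Real.log (P {ω | Real.exp (-2 * δ) * cNeg ω / cZero ω > t}).toReal / Real.log t)
      atTop (nhds (-(min α0 αinf).toReal)) :=
  tail_of_rho_BiRC_general P cNeg cZero hpos₂ hindep hident αinf α0 hαinf hα0 hbar htail_inf htail_0
    δ
end

section
/- Let Z_{−1} and Z_0 be i.i.d. strictly positive random variables such that lim_{t→∞} (1/t) log ℙ(Z_0 > t) = −(1−λ_c) for some λ_c ∈ (0,1). Then for any λ ∈ (0,1) the random variable ρ_0 := e^{(1−λ)Z_0 − (1+λ)Z_{−1}} satisfies lim_{t→∞} log ℙ(ρ_0 > t)/log t = −α(λ), where α(λ) := (1−λ_c)/(1−λ). -/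
open MeasureTheory Filter ProbabilityTheory

/-- **Tail of `ρ₀` for the R1M model.**
Let `Z₋₁, Z₀` be i.i.d. strictly positive random variables with
`lim_{t→∞} (1/t) log P(Z₀ > t) = -(1-λc)` for some `λc ∈ (0,1)`. Then for any
`λ ∈ (0,1)` the variable `ρ₀ := e^{(1-λ)Z₀ - (1+λ)Z₋₁}` satisfies
`lim_{t→∞} log P(ρ₀ > t)/log t = -α(λ)` where `α(λ) := (1-λc)/(1-λ)`. -/
theorem tail_of_rho_R1M
    {Ω : Type*} [MeasurableSpace Ω] (P : Measure Ω) [IsProbabilityMeasure P]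
    (ZNeg ZZero : Ω → ℝ) (hmeas₁ : Measurable ZNeg) (hmeas₂ : Measurable ZZero)
    (hpos₁ : ∀ ω, 0 < ZNeg ω) (hpos₂ : ∀ ω, 0 < ZZero ω)
    (hindep : IndepFun ZNeg ZZero P)
    (hident : IdentDistrib ZNeg ZZero P P)
    (lc : ℝ) (hlc : lc ∈ Set.Ioo (0 : ℝ) 1)
    (htail : Tendsto (fun t : ℝ => (1 / t) * Real.log (P {ω | ZZero ω > t}).toReal)
      atTop (nhds (-(1 - lc))))
    (lam : ℝ) (hlam : lam ∈ Set.Ioo (0 : ℝ) 1) :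
    Tendsto
      (fun t : ℝ =>
        Real.log (P {ω | Real.exp ((1 - lam) * ZZero ω - (1 + lam) * ZNeg ω) > t}).toReal
          / Real.log t)
      atTop (nhds (-((1 - lc) / (1 - lam)))) := by
  obtain ⟨hlc0, hlc1⟩ := hlc
  obtain ⟨hlam0, hlam1⟩ := hlam
  have h1lam : (0:ℝ) < 1 - lam := by linarith
  set q : ℝ → ℝ := fun s => (P {ω | ZZero ω > s}).toReal with hqdef
  set r : ℝ → ℝ := fun t =>
    (P {ω | Real.exp ((1 - lam) * ZZero ω - (1 + lam) * ZNeg ω) > t}).toReal with hrdef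
  -- q is antitone
  have hqmono : ∀ s u : ℝ, s ≤ u → q u ≤ q s := by
    intro s u hsu
    apply ENNReal.toReal_mono (measure_ne_top _ _)
    exact measure_mono fun ω h => lt_of_le_of_lt hsu h
  -- q is positive everywhere
  have hqpos : ∀ s, 0 < q s := by
    by_contra h
    push_neg at h
    obtain ⟨s₀, hs₀⟩ := h
    have hq0 : q s₀ = 0 := le_antisymm hs₀ ENNReal.toReal_nonneg
    have hev : (fun t : ℝ => (1 / t) * Real.log (q t)) =ᶠ[atTop] fun _ => (0:ℝ) := by
      filter_upwards [eventually_ge_atTop s₀] with t ht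
      have : q t = 0 := le_antisymm (hq0 ▸ hqmono s₀ t ht) ENNReal.toReal_nonneg
      simp [this]
    have h0 : Tendsto (fun t : ℝ => (1 / t) * Real.log (q t)) atTop (nhds 0) :=
      Tendsto.congr' hev.symm tendsto_const_nhds
    have := tendsto_nhds_unique htail h0
    linarith
  -- pick M with P(ZNeg < M) positive
  obtain ⟨M, hMpos⟩ : ∃ M : ℝ, 0 < (P (ZNeg ⁻¹' Set.Iio M)).toReal := by
    by_contra h
    push_neg at h
    have h0 : ∀ n : ℕ, P (ZNeg ⁻¹' Set.Iio (n : ℝ)) = 0 := by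
      intro n
      have h1 := h (n : ℝ)
      have h2 : (P (ZNeg ⁻¹' Set.Iio (n : ℝ))).toReal = 0 :=
        le_antisymm h1 ENNReal.toReal_nonneg
      exact (ENNReal.toReal_eq_zero_iff _).mp h2 |>.resolve_right (measure_ne_top _ _)
    have hU : P (⋃ n : ℕ, ZNeg ⁻¹' Set.Iio (n : ℝ)) = 0 := measure_iUnion_null h0
    have huniv : (⋃ n : ℕ, ZNeg ⁻¹' Set.Iio (n : ℝ)) = Set.univ := by
      ext ω
      simp only [Set.mem_iUnion, Set.mem_preimage, Set.mem_Iio, Set.mem_univ, iff_true]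
      exact exists_nat_gt (ZNeg ω)
    rw [huniv, measure_univ] at hU
    exact one_ne_zero hU
  set p : ℝ := (P (ZNeg ⁻¹' Set.Iio M)).toReal with hpdef
  set C : ℝ := (1 + lam) * M with hCdef
  set s : ℝ → ℝ := fun t => (Real.log t + C) / (1 - lam) with hsdef
  -- lower bound
  have hlow : ∀ t : ℝ, 0 < t → p * q (s t) ≤ r t := by
    intro t ht
    have hsub : ZNeg ⁻¹' Set.Iio M ∩ ZZero ⁻¹' Set.Ioi (s t) ⊆
        {ω | Real.exp ((1 - lam) * ZZero ω - (1 + lam) * ZNeg ω) > t} := by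
      rintro ω ⟨h1, h2⟩
      simp only [Set.mem_preimage, Set.mem_Iio] at h1
      simp only [Set.mem_preimage, Set.mem_Ioi] at h2
      simp only [Set.mem_setOf_eq, gt_iff_lt]
      rw [← Real.exp_log ht, Real.exp_lt_exp]
      have e1 : (1 - lam) * s t < (1 - lam) * ZZero ω :=
        mul_lt_mul_of_pos_left h2 h1lam
      have e2 : (1 + lam) * ZNeg ω < (1 + lam) * M :=
        mul_lt_mul_of_pos_left h1 (by linarith)
      have e3 : (1 - lam) * s t = Real.log t + C := by
        rw [hsdef]; field_simp
      rw [e3] at e1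
      rw [hCdef] at e1
      linarith
    have hmul : P (ZNeg ⁻¹' Set.Iio M ∩ ZZero ⁻¹' Set.Ioi (s t)) =
        P (ZNeg ⁻¹' Set.Iio M) * P (ZZero ⁻¹' Set.Ioi (s t)) :=
      hindep.measure_inter_preimage_eq_mul _ _ measurableSet_Iio measurableSet_Ioi
    have hle : P _ ≤ P _ := measure_mono hsub
    rw [hmul] at hle
    have hle' := ENNReal.toReal_mono (measure_ne_top _ _) hle
    rw [ENNReal.toReal_mul] at hle'
    have hset : ZZero ⁻¹' Set.Ioi (s t) = {ω | ZZero ω > s t} := rfl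
    rw [hset] at hle'
    exact hle'
  -- upper bound
  have hup : ∀ t : ℝ, 0 < t → r t ≤ q (Real.log t / (1 - lam)) := by
    intro t ht
    apply ENNReal.toReal_mono (measure_ne_top _ _)
    apply measure_mono
    intro ω hω
    simp only [Set.mem_setOf_eq, gt_iff_lt] at hω ⊢
    rw [← Real.exp_log ht, Real.exp_lt_exp] at hω
    have h1 : 0 < (1 + lam) * ZNeg ω := mul_pos (by linarith) (hpos₁ ω)
    rw [div_lt_iff₀ h1lam]
    linarith
  -- r is positive for positive t
  have hrpos : ∀ t : ℝ, 0 < t → 0 < r t := fun t ht =>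
    lt_of_lt_of_le (mul_pos hMpos (hqpos _)) (hlow t ht)
  -- limit of s at top
  have hs_tendsto : Tendsto s atTop atTop := by
    apply Tendsto.atTop_div_const h1lam
    exact tendsto_atTop_add_const_right _ C Real.tendsto_log_atTop
  have hlogt : Tendsto Real.log atTop atTop := Real.tendsto_log_atTop
  -- upper limit
  have hupper_lim : Tendsto (fun t => Real.log (q (Real.log t / (1 - lam))) / Real.log t)
      atTop (nhds (-((1 - lc) / (1 - lam)))) := by
    have hcomp : Tendsto (fun t : ℝ => Real.log t / (1 - lam)) atTop atTop :=
      Tendsto.atTop_div_const h1lam hlogt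
    have h1 : Tendsto (fun t : ℝ =>
        ((1 / (Real.log t / (1 - lam))) * Real.log (q (Real.log t / (1 - lam)))) *
          (1 / (1 - lam))) atTop (nhds (-(1 - lc) * (1 / (1 - lam)))) :=
      (htail.comp hcomp).mul_const _
    have heq : (fun t : ℝ =>
        ((1 / (Real.log t / (1 - lam))) * Real.log (q (Real.log t / (1 - lam)))) *
          (1 / (1 - lam))) =ᶠ[atTop]
        fun t => Real.log (q (Real.log t / (1 - lam))) / Real.log t := by
      filter_upwards [hlogt.eventually_gt_atTop 0] with t hlt
      field_simp
    have := Tendsto.congr' heq h1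
    convert this using 2
    ring
  -- lower limit
  have hlower_lim : Tendsto (fun t => Real.log (p * q (s t)) / Real.log t)
      atTop (nhds (-((1 - lc) / (1 - lam)))) := by
    have hterm1 : Tendsto (fun t : ℝ => Real.log p / Real.log t) atTop (nhds 0) :=
      tendsto_const_nhds.div_atTop hlogt
    have hterm2 : Tendsto (fun t : ℝ => (1 / s t) * Real.log (q (s t)))
        atTop (nhds (-(1 - lc))) := htail.comp hs_tendsto
    have hterm3 : Tendsto (fun t : ℝ => (1 + C / Real.log t) * (1 / (1 - lam)))
        atTop (nhds ((1 + 0) * (1 / (1 - lam)))) :=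
      ((tendsto_const_nhds.add (tendsto_const_nhds.div_atTop hlogt)).mul_const _)
    have hF : Tendsto (fun t : ℝ => Real.log p / Real.log t +
        ((1 / s t) * Real.log (q (s t))) * ((1 + C / Real.log t) * (1 / (1 - lam))))
        atTop (nhds (0 + -(1 - lc) * ((1 + 0) * (1 / (1 - lam))))) :=
      hterm1.add (hterm2.mul hterm3)
    have heq : (fun t : ℝ => Real.log p / Real.log t +
        ((1 / s t) * Real.log (q (s t))) * ((1 + C / Real.log t) * (1 / (1 - lam))))
        =ᶠ[atTop] fun t => Real.log (p * q (s t)) / Real.log t := by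
      filter_upwards [hlogt.eventually_gt_atTop (|C| + 1)] with t hlt
      have hlogt0 : 0 < Real.log t := lt_of_le_of_lt (by positivity) hlt
      have hst0 : 0 < s t := by
        rw [hsdef]
        apply div_pos _ h1lam
        have := abs_nonneg C
        have := neg_abs_le C
        linarith
      have hstC : 0 < Real.log t + C := by
        have := neg_abs_le C
        linarith
      have key : (1 / s t) * ((1 + C / Real.log t) * (1 / (1 - lam))) = 1 / Real.log t := by
        have hs_eq : s t = (Real.log t + C) / (1 - lam) := rfl
        rw [hs_eq]
        field_simp
      have key2 : ((1 / s t) * Real.log (q (s t))) * ((1 + C / Real.log t) * (1 / (1 - lam)))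
          = Real.log (q (s t)) / Real.log t := by
        calc ((1 / s t) * Real.log (q (s t))) * ((1 + C / Real.log t) * (1 / (1 - lam)))
            = ((1 / s t) * ((1 + C / Real.log t) * (1 / (1 - lam)))) * Real.log (q (s t)) := by
              ring
          _ = (1 / Real.log t) * Real.log (q (s t)) := by rw [key]
          _ = Real.log (q (s t)) / Real.log t := by rw [one_div, inv_mul_eq_div]
      rw [Real.log_mul (ne_of_gt hMpos) (ne_of_gt (hqpos (s t))), add_div, key2]
    have := Tendsto.congr' heq hF
    convert this using 2
    ring
  -- squeeze
  apply tendsto_of_tendsto_of_tendsto_of_le_of_le' hlower_lim hupper_lim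
  · filter_upwards [hlogt.eventually_gt_atTop 0, eventually_gt_atTop (0:ℝ)] with t hlt ht
    have h1 : Real.log (p * q (s t)) ≤ Real.log (r t) :=
      Real.log_le_log (mul_pos hMpos (hqpos _)) (hlow t ht)
    exact div_le_div_of_nonneg_right h1 hlt.le
  · filter_upwards [hlogt.eventually_gt_atTop 0, eventually_gt_atTop (0:ℝ)] with t hlt ht
    have h1 : Real.log (r t) ≤ Real.log (q (Real.log t / (1 - lam))) :=
      Real.log_le_log (hrpos t ht) (hup t ht)
    exact div_le_div_of_nonneg_right h1 hlt.le
end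

section
/- Let (x_k)_{k∈ℕ} be a deterministic sequence of integers with x_0 = 0, |x_{k+1} − x_k| = 1 for all k, and x_k → +∞ as k → ∞. For n ≥ 1 let T_n := inf{k ≥ 0 : x_k = n} (which is finite for every n). Suppose there exist C > 0 and n_1 such that for all n ≥ n_1 and all k ≥ 0 one has x_{T_n + k} ≥ n − C log n. Then for any a > 0: lim_{n→∞} (log T_n)/(log n) = 1/a if and only if lim_{n→∞} (log x_n)/(log n) = a. -/
/-!
Let `M k` be the highest level reached by time `k`. Then `T (M k) ≤ k < T (M k + 1)`, and
the hypothesis on returns gives `M k - C log (M k) ≤ x k ≤ M k`. Hence `log x k ∼ log (M k)`,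
while `log k` is squeezed between `log T (M k)` and `log T (M k + 1)`, both `∼ (1/a) log (M k)`;
so `log x k / log k → a`. Conversely, since `x (T n) = n`, evaluating `log x k / log k → a`
along `k = T n` gives `log n / log T n → a`.
-/

open Filter Topology Asymptotics

theorem tendsto_log_div_log_of_isEquivalent {α : Type*} {l : Filter α} {u v : α → ℝ}
    (huv : u ~[l] v) (hv : Tendsto v l atTop) :
    Tendsto (fun t => Real.log (u t) / Real.log (v t)) l (𝓝 1) :=
  (isEquivalent_iff_tendsto_one ((Real.tendsto_log_atTop.comp hv).eventually_ne_atTop 0)).mp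
    (huv.log hv)

theorem isEquivalent_sub_mul_log_atTop (C : ℝ) :
    (fun t => t - C * Real.log t) ~[atTop] id :=
  IsEquivalent.refl.sub_isLittleO (Real.isLittleO_log_id_atTop.const_mul_left C)

theorem Filter.Tendsto.log_comp_succ_div_log {f : ℕ → ℝ} {c : ℝ}
    (h : Tendsto (fun n => Real.log (f n) / Real.log n) atTop (𝓝 c)) :
    Tendsto (fun n => Real.log (f (n + 1)) / Real.log n) atTop (𝓝 c) := by
  have hsucc :
      Tendsto (fun n : ℕ => Real.log ((n + 1 : ℕ) : ℝ) / Real.log n) atTop (𝓝 1) := by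
    refine tendsto_log_div_log_of_isEquivalent (isEquivalent_of_tendsto_one ?_)
      tendsto_natCast_atTop_atTop
    simpa [Pi.div_def] using tendsto_natCast_div_add_atTop (1 : ℝ) |>.inv₀ one_ne_zero
  have := (h.comp (tendsto_add_atTop_nat 1)).mul hsucc
  rw [mul_one] at this
  refine this.congr' ?_
  filter_upwards [eventually_ge_atTop 1] with n hn
  have : Real.log ((n + 1 : ℕ) : ℝ) ≠ 0 := (Real.log_pos (by norm_cast; omega)).ne'
  simp only [Function.comp_apply]
  field_simp

section UpwardSkipFree

variable {x : ℕ → ℤ}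

theorem le_add_of_succ_le_add_one (hstep : ∀ k, x (k + 1) ≤ x k + 1) (k : ℕ) :
    x k ≤ x 0 + k := by
  induction k with
  | zero => simp
  | succ k ih => push_cast; linarith [hstep k]

theorem exists_eq_of_succ_le_add_one (hstep : ∀ k, x (k + 1) ≤ x k + 1) {m : ℤ} {K : ℕ}
    (h0 : x 0 ≤ m) (hK : m ≤ x K) : ∃ j ≤ K, x j = m := by
  induction K with
  | zero => exact ⟨0, le_rfl, le_antisymm h0 hK⟩
  | succ K ih =>
    by_cases hm : m ≤ x K
    · obtain ⟨j, hjK, hj⟩ := ih hm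
      exact ⟨j, hjK.trans K.le_succ, hj⟩
    · exact ⟨K + 1, le_rfl, by linarith [hstep K]⟩

theorem exists_eq_natCast_of_tendsto_atTop (hx0 : x 0 = 0) (hstep : ∀ k, x (k + 1) ≤ x k + 1)
    (hinf : Tendsto x atTop atTop) (n : ℕ) : ∃ k, x k = n := by
  obtain ⟨K, hK⟩ := (hinf.eventually_ge_atTop (n : ℤ)).exists
  obtain ⟨j, -, hj⟩ := exists_eq_of_succ_le_add_one hstep (by omega) hK
  exact ⟨j, hj⟩

noncomputable def hitTime (x : ℕ → ℤ) (n : ℕ) : ℕ := sInf {k | x k = n}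

theorem hitTime_spec {n : ℕ} (h : ∃ k, x k = n) : x (hitTime x n) = n :=
  Nat.sInf_mem h

theorem hitTime_le {n k : ℕ} (h : x k = n) : hitTime x n ≤ k :=
  Nat.sInf_le h

theorem le_hitTime (hx0 : x 0 = 0) (hstep : ∀ k, x (k + 1) ≤ x k + 1) {n : ℕ}
    (h : ∃ k, x k = n) : n ≤ hitTime x n := by
  have := le_add_of_succ_le_add_one hstep (hitTime x n)
  rw [hitTime_spec h, hx0] at this
  omega

theorem tendsto_hitTime (hx0 : x 0 = 0) (hstep : ∀ k, x (k + 1) ≤ x k + 1)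
    (hits : ∀ n : ℕ, ∃ k, x k = n) : Tendsto (hitTime x) atTop atTop :=
  tendsto_atTop_mono (fun n => le_hitTime hx0 hstep (hits n)) tendsto_id

-- The running maximum `max_{j ≤ k} x j` (clamped at `0`), phrased through hitting times.
noncomputable def maxLevel (x : ℕ → ℤ) (k : ℕ) : ℕ :=
  Nat.findGreatest (fun n => hitTime x n ≤ k) k

theorem hitTime_maxLevel_le (hx0 : x 0 = 0) (k : ℕ) : hitTime x (maxLevel x k) ≤ k :=
  Nat.findGreatest_spec (P := fun n => hitTime x n ≤ k) k.zero_le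
    ((hitTime_le (n := 0) hx0).trans k.zero_le)

theorem lt_hitTime_maxLevel_add_one (hx0 : x 0 = 0) (hstep : ∀ k, x (k + 1) ≤ x k + 1)
    (hits : ∀ n : ℕ, ∃ k, x k = n) (k : ℕ) : k < hitTime x (maxLevel x k + 1) := by
  by_contra! hle
  have : maxLevel x k + 1 ≤ maxLevel x k :=
    Nat.le_findGreatest (P := fun n => hitTime x n ≤ k)
      ((le_hitTime hx0 hstep (hits _)).trans hle) hle
  omega

theorem le_maxLevel (hx0 : x 0 = 0) (hstep : ∀ k, x (k + 1) ≤ x k + 1) (k : ℕ) :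
    x k ≤ maxLevel x k := by
  rcases le_or_gt (x k) 0 with hk | hk
  · exact hk.trans (Nat.cast_nonneg _)
  · obtain ⟨n, hn⟩ := Int.eq_ofNat_of_zero_le hk.le
    have hT : hitTime x n ≤ k := hitTime_le hn
    rw [hn]
    exact_mod_cast Nat.le_findGreatest (P := fun n => hitTime x n ≤ k)
      ((le_hitTime hx0 hstep ⟨k, hn⟩).trans hT) hT

theorem tendsto_maxLevel (hx0 : x 0 = 0) (hstep : ∀ k, x (k + 1) ≤ x k + 1)
    (hinf : Tendsto x atTop atTop) : Tendsto (maxLevel x) atTop atTop :=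
  tendsto_natCast_atTop_iff.mp (tendsto_atTop_mono (le_maxLevel hx0 hstep) hinf)

theorem tendsto_log_apply_div_log_maxLevel (hx0 : x 0 = 0) (hstep : ∀ k, x (k + 1) ≤ x k + 1)
    (hinf : Tendsto x atTop atTop) {C : ℝ} {n₁ : ℕ}
    (hback : ∀ n ≥ n₁, ∀ k : ℕ, (n : ℝ) - C * Real.log n ≤ x (hitTime x n + k)) :
    Tendsto (fun k => Real.log (x k) / Real.log (maxLevel x k)) atTop (𝓝 1) := by
  set M := maxLevel x
  have hM := tendsto_maxLevel hx0 hstep hinf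
  have hMℝ : Tendsto (fun k => (M k : ℝ)) atTop atTop := tendsto_natCast_atTop_atTop.comp hM
  have hequiv := isEquivalent_sub_mul_log_atTop C
  have hlower : Tendsto (fun k => Real.log (M k - C * Real.log (M k)) / Real.log (M k))
      atTop (𝓝 1) :=
    (tendsto_log_div_log_of_isEquivalent hequiv tendsto_id).comp hMℝ
  have hx_ge : ∀ k, n₁ ≤ M k → (M k : ℝ) - C * Real.log (M k) ≤ x k := fun k hk => by
    have := hback (M k) hk (k - hitTime x (M k))
    rwa [Nat.add_sub_cancel' (hitTime_maxLevel_le hx0 k)] at this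
  have hev : ∀ᶠ k in atTop,
      n₁ ≤ M k ∧ 0 < (M k : ℝ) - C * Real.log (M k) ∧ 0 ≤ Real.log (M k) := by
    filter_upwards [hM.eventually_ge_atTop n₁, hM.eventually_ge_atTop 1,
      hMℝ.eventually ((hequiv.symm.tendsto_atTop tendsto_id).eventually_gt_atTop 0)]
      with k hn₁ h1 hpos
    exact ⟨hn₁, hpos, Real.log_nonneg (by exact_mod_cast h1)⟩
  refine tendsto_of_tendsto_of_tendsto_of_le_of_le' hlower tendsto_const_nhds ?_ ?_
  · filter_upwards [hev] with k ⟨hn₁, hpos, hlog⟩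
    exact div_le_div_of_nonneg_right (Real.log_le_log hpos (hx_ge k hn₁)) hlog
  · filter_upwards [hev] with k ⟨hn₁, hpos, hlog⟩
    exact div_le_one_of_le₀ (Real.log_le_log (hpos.trans_le (hx_ge k hn₁))
      (by exact_mod_cast le_maxLevel hx0 hstep k)) hlog

theorem tendsto_log_div_log_maxLevel_of_hitTime (hx0 : x 0 = 0)
    (hstep : ∀ k, x (k + 1) ≤ x k + 1) (hinf : Tendsto x atTop atTop) {c : ℝ}
    (h : Tendsto (fun n => Real.log (hitTime x n) / Real.log n) atTop (𝓝 c)) :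
    Tendsto (fun k : ℕ => Real.log k / Real.log (maxLevel x k)) atTop (𝓝 c) := by
  set M := maxLevel x
  have hits := exists_eq_natCast_of_tendsto_atTop hx0 hstep hinf
  have hM := tendsto_maxLevel hx0 hstep hinf
  refine tendsto_of_tendsto_of_tendsto_of_le_of_le' (h.comp hM)
    (h.log_comp_succ_div_log.comp hM) ?_ ?_
  · filter_upwards [hM.eventually_ge_atTop 1] with k hk
    have hlog : 0 ≤ Real.log (M k) := Real.log_nonneg (by exact_mod_cast hk)
    have hT : 0 < hitTime x (M k) := hk.trans (le_hitTime hx0 hstep (hits _))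
    exact div_le_div_of_nonneg_right (Real.log_le_log (by exact_mod_cast hT)
      (by exact_mod_cast hitTime_maxLevel_le hx0 k)) hlog
  · filter_upwards [hM.eventually_ge_atTop 1, eventually_ge_atTop 1] with k hk hk1
    have hlog : 0 ≤ Real.log (M k) := Real.log_nonneg (by exact_mod_cast hk)
    exact div_le_div_of_nonneg_right (Real.log_le_log (by exact_mod_cast hk1)
      (by exact_mod_cast (lt_hitTime_maxLevel_add_one hx0 hstep hits k).le)) hlog

theorem tendsto_log_div_log_of_tendsto_log_hitTime (hx0 : x 0 = 0)
    (hstep : ∀ k, x (k + 1) ≤ x k + 1) (hinf : Tendsto x atTop atTop) {C : ℝ} {n₁ : ℕ}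
    (hback : ∀ n ≥ n₁, ∀ k : ℕ, (n : ℝ) - C * Real.log n ≤ x (hitTime x n + k))
    {c : ℝ} (hc : c ≠ 0)
    (h : Tendsto (fun n => Real.log (hitTime x n) / Real.log n) atTop (𝓝 c)) :
    Tendsto (fun k => Real.log (x k) / Real.log k) atTop (𝓝 c⁻¹) := by
  have hquot := (tendsto_log_apply_div_log_maxLevel hx0 hstep hinf hback).div
    (tendsto_log_div_log_maxLevel_of_hitTime hx0 hstep hinf h) hc
  rw [one_div] at hquot
  refine hquot.congr' ?_
  filter_upwards [(tendsto_maxLevel hx0 hstep hinf).eventually_ge_atTop 2] with k hk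
  have : Real.log (maxLevel x k) ≠ 0 := (Real.log_pos (by exact_mod_cast hk)).ne'
  exact div_div_div_cancel_right₀ this _ _

theorem tendsto_log_div_log_of_rightInverse {T : ℕ → ℕ} (hxT : ∀ n, x (T n) = n)
    (hT : Tendsto T atTop atTop) {c : ℝ} (hc : c ≠ 0)
    (h : Tendsto (fun k => Real.log (x k) / Real.log k) atTop (𝓝 c)) :
    Tendsto (fun n => Real.log (T n) / Real.log n) atTop (𝓝 c⁻¹) := by
  simpa [Function.comp_def, hxT, inv_div] using (h.comp hT).inv₀ hc

end UpwardSkipFree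

theorem hitting_time_scaling_inversion_general
    (x : ℕ → ℤ) (hx0 : x 0 = 0)
    (hnn : ∀ k : ℕ, |x (k + 1) - x k| = 1)
    (hinf : Tendsto (fun k => (x k : ℝ)) atTop atTop)
    (T : ℕ → ℕ) (hT : ∀ n : ℕ, T n = sInf {k : ℕ | x k = (n : ℤ)})
    (C : ℝ) (n₁ : ℕ)
    (hback : ∀ n ≥ n₁, ∀ k : ℕ, (n : ℝ) - C * Real.log n ≤ (x (T n + k) : ℝ))
    (a : ℝ) (ha : 0 < a) :
    Tendsto (fun n : ℕ => Real.log (T n) / Real.log n) atTop (nhds (1 / a)) ↔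
      Tendsto (fun n : ℕ => Real.log (x n : ℝ) / Real.log n) atTop (nhds a) := by
  have hstep (k : ℕ) : x (k + 1) ≤ x k + 1 := by linarith [le_of_abs_le (hnn k).le]
  replace hinf : Tendsto x atTop atTop := tendsto_intCast_atTop_iff.mp hinf
  obtain rfl : T = hitTime x := funext hT
  constructor
  · intro h
    simpa using tendsto_log_div_log_of_tendsto_log_hitTime hx0 hstep hinf hback
      (one_div_ne_zero ha.ne') h
  · intro h
    have hits := exists_eq_natCast_of_tendsto_atTop hx0 hstep hinf
    simpa using tendsto_log_div_log_of_rightInverse (fun n => hitTime_spec (hits n))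
      (tendsto_hitTime hx0 hstep hits) ha.ne' h

/-- **Inversion of the scaling of hitting times (deterministic version).**
Let `(x_k)` be a nearest-neighbor path on `ℤ` with `x 0 = 0` tending to `+∞`, and
`T n := inf {k : x k = n}`. If for some `C > 0` and all large `n` one has
`x_{T_n + k} ≥ n - C log n` for all `k ≥ 0`, then for any `a > 0`,
`log T_n / log n → 1/a` if and only if `log x_n / log n → a`. -/
theorem hitting_time_scaling_inversion
    (x : ℕ → ℤ) (hx0 : x 0 = 0)
    (hnn : ∀ k : ℕ, |x (k + 1) - x k| = 1)
    (hinf : Tendsto (fun k => (x k : ℝ)) atTop atTop)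
    (T : ℕ → ℕ) (hT : ∀ n : ℕ, T n = sInf {k : ℕ | x k = (n : ℤ)})
    (C : ℝ) (hC : 0 < C) (n₁ : ℕ)
    (hback : ∀ n ≥ n₁, ∀ k : ℕ, (n : ℝ) - C * Real.log n ≤ (x (T n + k) : ℝ))
    (a : ℝ) (ha : 0 < a) :
    Tendsto (fun n : ℕ => Real.log (T n) / Real.log n) atTop (nhds (1 / a)) ↔
      Tendsto (fun n : ℕ => Real.log (x n : ℝ) / Real.log n) atTop (nhds a) :=
  hitting_time_scaling_inversion_general x hx0 hnn hinf T hT C n₁ hback a ha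
end

section
/- Let (ρ_k)_{k≥1} be i.i.d. strictly positive random variables with lim_{t→∞} log ℙ(ρ_1 > t)/log t = −α for some α > 0. Then for every ε > 0, ℙ-almost surely there exists n_0 such that for all n ≥ n_0 the number of indices 1 ≤ k ≤ n with ρ_k > n^{1/α − ε} is at least 2/ε. -/
/-!
Put `K = ⌈2/ε⌉`, `c = n^(1/α - ε)` and `p = ℙ(ρ₁ > c)`. If at most `K` of `ρ₁, …, ρₙ` exceed `c`,
then some `n - K` of them lie below `c`; a union bound over these index sets and independence give
probability at most `n^K (1 - p)^(n - K) ≤ n^K exp(-n p / 2)`. Since `α (1/α - ε) < 1`, the tail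
assumption yields `n p ≥ n^δ` for some `δ > 0`, so these probabilities are summable and
Borel–Cantelli finishes the proof.
-/

open MeasureTheory Filter ProbabilityTheory Finset Real

theorem ProbabilityTheory.iIndepFun.measure_le_card_filter_mem_le {ι Ω β : Type*}
    [MeasurableSpace Ω] [MeasurableSpace β] {P : Measure Ω} {X : ι → Ω → β}
    (hX : iIndepFun X P) {j : ι} (hident : ∀ i, IdentDistrib (X i) (X j) P P)
    {B : Set β} [DecidablePred (· ∈ B)] (hB : MeasurableSet B) (s : Finset ι) (m : ℕ) :
    P {ω | m ≤ #{i ∈ s | X i ω ∈ B}} ≤ (#s).choose m * P (X j ⁻¹' B) ^ m := by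
  have hcover : {ω | m ≤ #{i ∈ s | X i ω ∈ B}} ⊆ ⋃ t ∈ s.powersetCard m, ⋂ i ∈ t, X i ⁻¹' B := by
    intro ω hω
    obtain ⟨t, hts, rfl⟩ := Finset.exists_subset_card_eq hω
    refine Set.mem_biUnion (mem_powersetCard.2 ⟨hts.trans (filter_subset _ _), rfl⟩) ?_
    exact Set.mem_iInter₂.2 fun i hi => (mem_filter.1 (hts hi)).2
  calc P {ω | m ≤ #{i ∈ s | X i ω ∈ B}}
      ≤ ∑ t ∈ s.powersetCard m, P (⋂ i ∈ t, X i ⁻¹' B) :=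
        (measure_mono hcover).trans (measure_biUnion_finset_le _ _)
    _ = ∑ t ∈ s.powersetCard m, P (X j ⁻¹' B) ^ m := by
        refine sum_congr rfl fun t ht => ?_
        rw [hX.meas_biInter fun i _ => ⟨B, hB, rfl⟩,
          prod_congr rfl fun i _ => (hident i).measure_mem_eq hB, prod_const,
          (mem_powersetCard.1 ht).2]
    _ = (#s).choose m * P (X j ⁻¹' B) ^ m := by
        rw [sum_const, card_powersetCard, nsmul_eq_mul]

theorem choose_mul_one_sub_pow_le {n K : ℕ} (hK : 2 * K ≤ n) {p : ℝ} (hp₀ : 0 ≤ p)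
    (hp₁ : p ≤ 1) :
    (n.choose (n - K) : ℝ) * (1 - p) ^ (n - K) ≤ n ^ K * exp (-(n * p) / 2) := by
  have hchoose : (n.choose (n - K) : ℝ) ≤ n ^ K := by
    rw [Nat.choose_symm (by omega)]
    exact_mod_cast Nat.choose_le_pow n K
  have hhalf : (n : ℝ) / 2 ≤ (n - K : ℕ) := by
    rw [Nat.cast_sub (by omega)]
    have : (2 * K : ℝ) ≤ n := by exact_mod_cast hK
    linarith
  have hpow : (1 - p) ^ (n - K) ≤ exp (-(n * p) / 2) :=
    calc (1 - p) ^ (n - K) ≤ exp (-p) ^ (n - K) :=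
          pow_le_pow_left₀ (by linarith) (by linarith [add_one_le_exp (-p)]) _
      _ = exp (-(p * (n - K : ℕ))) := by rw [← exp_nat_mul]; ring_nf
      _ ≤ exp (-(n * p) / 2) := exp_le_exp.2 (by nlinarith)
  exact mul_le_mul hchoose hpow (by positivity) (by positivity)

theorem ProbabilityTheory.iIndepFun.measure_card_filter_lt_le {ι Ω : Type*}
    [MeasurableSpace Ω] {P : Measure Ω} [IsProbabilityMeasure P] {X : ι → Ω → ℝ}
    (hX : iIndepFun X P) {j : ι} (hident : ∀ i, IdentDistrib (X i) (X j) P P)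
    (s : Finset ι) (c : ℝ) {K : ℕ} (hK : 2 * K ≤ #s) :
    P {ω | #{i ∈ s | c < X i ω} ≤ K} ≤
      ENNReal.ofReal (#s ^ K * exp (-(#s * (P {ω | c < X j ω}).toReal) / 2)) := by
  have hsub : {ω | #{i ∈ s | c < X i ω} ≤ K} ⊆ {ω | #s - K ≤ #{i ∈ s | X i ω ∈ Set.Iic c}} := by
    intro ω hω
    have := card_filter_add_card_filter_not (s := s) (p := fun i => c < X i ω)
    simp only [Set.mem_ofPred_eq, Set.mem_Iic, not_lt] at hω this ⊢
    omega
  have hq : (P (X j ⁻¹' Set.Iic c)).toReal = 1 - (P {ω | c < X j ω}).toReal := by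
    have hcompl : X j ⁻¹' Set.Iic c = {ω | c < X j ω}ᶜ := by ext; simp
    have hnull : NullMeasurableSet {ω | c < X j ω} P :=
      (hident j).aemeasurable_snd.nullMeasurableSet_preimage measurableSet_Ioi
    rw [hcompl, prob_compl_eq_one_sub₀ hnull,
      ENNReal.toReal_sub_of_le prob_le_one ENNReal.one_ne_top, ENNReal.toReal_one]
  calc P {ω | #{i ∈ s | c < X i ω} ≤ K}
      ≤ (#s).choose (#s - K) * P (X j ⁻¹' Set.Iic c) ^ (#s - K) :=
        (measure_mono hsub).trans (hX.measure_le_card_filter_mem_le hident measurableSet_Iic _ _)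
    _ = ENNReal.ofReal ((#s).choose (#s - K) * (1 - (P {ω | c < X j ω}).toReal) ^ (#s - K)) := by
        rw [ENNReal.ofReal_mul (by positivity), ENNReal.ofReal_natCast, ← hq,
          ENNReal.ofReal_pow ENNReal.toReal_nonneg, ENNReal.ofReal_toReal (measure_ne_top _ _)]
    _ ≤ _ := ENNReal.ofReal_le_ofReal (choose_mul_one_sub_pow_le hK ENNReal.toReal_nonneg
        (ENNReal.toReal_le_of_le_ofReal zero_le_one (by simpa using prob_le_one)))

theorem eventually_rpow_lt_of_tendsto_log_div_log {f : ℝ → ℝ} (hf : ∀ t, 0 ≤ f t) {L γ : ℝ}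
    (hL : L ≠ 0) (h : Tendsto (fun t => log (f t) / log t) atTop (nhds L)) (hγ : γ < L) :
    ∀ᶠ t in atTop, t ^ γ < f t := by
  filter_upwards [h.eventually (eventually_gt_nhds hγ), h.eventually (eventually_ne_nhds hL),
    eventually_gt_atTop 1] with t hγt hne ht
  have hlog : 0 < log t := log_pos ht
  have hft : 0 < f t := (hf t).lt_of_ne fun h0 => hne (by rw [← h0, log_zero, zero_div])
  rw [← log_lt_log_iff (by positivity) hft, log_rpow (by linarith)]
  exact (lt_div_iff₀ hlog).1 hγt

theorem exists_rpow_le_of_tendsto_log_div_log {f : ℝ → ℝ} (hf : ∀ t, 0 ≤ f t)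
    (hanti : Antitone f) {α β : ℝ} (hα : 0 < α) (hβ : β < 1 / α)
    (h : Tendsto (fun t => log (f t) / log t) atTop (nhds (-α))) :
    ∃ δ : ℝ, 0 < δ ∧ ∀ᶠ t in atTop, t ^ (δ - 1) ≤ f (t ^ β) := by
  -- a positive exponent `θ ≥ β` with `α θ < 1`; by monotonicity `f (t ^ θ) ≤ f (t ^ β)`
  set θ := max β (1 / (2 * α))
  have hθ₀ : 0 < θ := lt_max_of_lt_right (by positivity)
  have hαθ : α * θ < 1 := by
    have : θ < 1 / α := max_lt hβ (by gcongr; linarith)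
    rwa [lt_div_iff₀ hα, mul_comm] at this
  refine ⟨(1 - α * θ) / 2, by linarith, ?_⟩
  have hγ : ((1 - α * θ) / 2 - 1) / θ < -α := by
    rw [div_lt_iff₀ hθ₀]; linarith
  filter_upwards [(tendsto_rpow_atTop hθ₀).eventually
    (eventually_rpow_lt_of_tendsto_log_div_log hf (by linarith) h hγ),
    eventually_ge_atTop 1] with t hlt ht
  rw [← rpow_mul (by linarith), mul_div_cancel₀ _ hθ₀.ne'] at hlt
  exact hlt.le.trans (hanti (rpow_le_rpow_of_exponent_le ht (le_max_left _ _)))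

theorem summable_pow_mul_exp_neg_rpow (K : ℕ) {δ : ℝ} (hδ : 0 < δ) :
    Summable fun n : ℕ => (n : ℝ) ^ K * exp (-(n : ℝ) ^ δ / 2) := by
  have hlim : Tendsto (fun n : ℕ => (n : ℝ) ^ (K + 2 : ℝ) * exp (-(n : ℝ) ^ δ / 2))
      atTop (nhds 0) := by
    refine ((tendsto_rpow_mul_exp_neg_mul_atTop_nhds_zero ((K + 2) / δ) (1 / 2)
      one_half_pos).comp ((tendsto_rpow_atTop hδ).comp tendsto_natCast_atTop_atTop)).congr
      fun n => ?_
    simp only [Function.comp_apply]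
    rw [← rpow_mul n.cast_nonneg, mul_div_cancel₀ _ hδ.ne']
    ring_nf
  refine summable_of_isBigO_nat (summable_nat_pow_inv.2 one_lt_two) ?_
  refine (hlim.isBigO_one ℝ).mul (Asymptotics.isBigO_refl (fun n : ℕ => ((n : ℝ) ^ 2)⁻¹) _)
    |>.congr' ?_ (by simp)
  filter_upwards [eventually_gt_atTop 0] with n hn
  have : (0 : ℝ) < n := by exact_mod_cast hn
  rw [rpow_add this, rpow_natCast, rpow_two]
  field_simp

theorem MeasureTheory.ae_eventually_notMem_of_eventually_le_ofReal {α : Type*}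
    [MeasurableSpace α] {μ : Measure α} [IsFiniteMeasure μ] {s : ℕ → Set α} {u : ℕ → ℝ}
    (hu : Summable u) (h : ∀ᶠ n in atTop, μ (s n) ≤ ENNReal.ofReal (u n)) :
    ∀ᵐ x ∂μ, ∀ᶠ n in atTop, x ∉ s n := by
  obtain ⟨n₀, hn₀⟩ := eventually_atTop.1 h
  refine ae_eventually_notMem ?_
  have htail : ∑' i, μ (s (i + n₀)) ≠ ⊤ :=
    ne_top_of_le_ne_top ((summable_nat_add_iff n₀).2 hu).tsum_ofReal_ne_top
      (ENNReal.tsum_le_tsum fun i => hn₀ _ (Nat.le_add_left _ _))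
  rw [← ENNReal.summable.sum_add_tsum_nat_add']
  exact ENNReal.add_ne_top.2 ⟨ENNReal.sum_ne_top.2 fun _ _ => measure_ne_top _ _, htail⟩

theorem many_deep_traps_general
    {Ω : Type*} [MeasurableSpace Ω] (P : Measure Ω) [IsProbabilityMeasure P]
    (ρ : ℕ → Ω → ℝ)
    (hindep : iIndepFun ρ P)
    (hident : ∀ k, IdentDistrib (ρ k) (ρ 1) P P)
    (α : ℝ) (hα : 0 < α)
    (htail : Tendsto (fun t : ℝ => Real.log (P {ω | ρ 1 ω > t}).toReal / Real.log t)
      atTop (nhds (-α)))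
    (ε : ℝ) (hε : 0 < ε) :
    ∀ᵐ ω ∂P, ∃ n₀ : ℕ, ∀ n ≥ n₀,
      (2 / ε : ℝ) ≤
        (((Finset.Icc 1 n).filter (fun k => ρ k ω > (n : ℝ) ^ (1 / α - ε))).card : ℝ) := by
  have hanti : Antitone fun t => (P {ω | ρ 1 ω > t}).toReal := fun s t hst =>
    ENNReal.toReal_mono (measure_ne_top _ _) (measure_mono fun ω hω => hst.trans_lt hω)
  obtain ⟨δ, hδ, hp⟩ := exists_rpow_le_of_tendsto_log_div_log (fun t => ENNReal.toReal_nonneg)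
    hanti hα (show 1 / α - ε < 1 / α by linarith) htail
  set K := ⌈2 / ε⌉₊
  have hbad : ∀ᶠ n : ℕ in atTop,
      P {ω | #{k ∈ Icc 1 n | (n : ℝ) ^ (1 / α - ε) < ρ k ω} ≤ K} ≤
        ENNReal.ofReal (n ^ K * exp (-(n : ℝ) ^ δ / 2)) := by
    filter_upwards [tendsto_natCast_atTop_atTop.eventually hp, eventually_ge_atTop (2 * K),
      eventually_gt_atTop 0] with n hpn hn hn₀
    have hcard : #(Icc 1 n) = n := by simp
    refine (hindep.measure_card_filter_lt_le hident _ _ (by rwa [hcard])).trans ?_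
    have hmass : (n : ℝ) ^ δ ≤ n * (P {ω | ρ 1 ω > (n : ℝ) ^ (1 / α - ε)}).toReal := by
      have : (0 : ℝ) < n := by exact_mod_cast hn₀
      calc (n : ℝ) ^ δ = n * (n : ℝ) ^ (δ - 1) := by
            rw [rpow_sub_one this.ne', mul_div_cancel₀ _ this.ne']
        _ ≤ _ := by gcongr
    rw [hcard]
    gcongr
  filter_upwards [ae_eventually_notMem_of_eventually_le_ofReal
    (summable_pow_mul_exp_neg_rpow K hδ) hbad] with ω hω
  obtain ⟨n₀, hn₀⟩ := eventually_atTop.1 hω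
  refine ⟨n₀, fun n hn => ?_⟩
  calc 2 / ε ≤ K := Nat.le_ceil _
    _ ≤ _ := by exact_mod_cast (not_le.1 (hn₀ n hn)).le

/-- **There are many deep traps.**
Let `(ρ_k)_{k≥1}` be i.i.d. strictly positive random variables with
`lim_{t→∞} log P(ρ₁ > t)/log t = -α` for some `α > 0`. Then for every `ε > 0`,
`P`-almost surely, for all large `n` the number of indices `1 ≤ k ≤ n` with
`ρ_k > n^{1/α - ε}` is at least `2/ε`. -/
theorem many_deep_traps
    {Ω : Type*} [MeasurableSpace Ω] (P : Measure Ω) [IsProbabilityMeasure P]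
    (ρ : ℕ → Ω → ℝ) (hmeas : ∀ k, Measurable (ρ k))
    (hpos : ∀ k ω, 0 < ρ k ω)
    (hindep : iIndepFun ρ P)
    (hident : ∀ k, IdentDistrib (ρ k) (ρ 1) P P)
    (α : ℝ) (hα : 0 < α)
    (htail : Tendsto (fun t : ℝ => Real.log (P {ω | ρ 1 ω > t}).toReal / Real.log t)
      atTop (nhds (-α)))
    (ε : ℝ) (hε : 0 < ε) :
    ∀ᵐ ω ∂P, ∃ n₀ : ℕ, ∀ n ≥ n₀,
      (2 / ε : ℝ) ≤
        (((Finset.Icc 1 n).filter (fun k => ρ k ω > (n : ℝ) ^ (1 / α - ε))).card : ℝ) :=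
  many_deep_traps_general P ρ hindep hident α hα htail ε hε
end

section
/- Let (c_k)_{k≥1} be i.i.d. strictly positive random variables with lim_{t→∞} log ℙ(c_1 > t)/log t = −α for some α ∈ (0, ∞), and let δ > 0. Then the random series W := Σ_{k≥1} e^{−2δk} c_k converges ℙ-almost surely, and lim_{t→∞} log ℙ(W > t)/log t = −α. -/
/-!
Write `q = e^{-2δ}`, so `W = ∑ q^{k+1} c_{k+1}`. Since `W ≥ q c₁`, `ℙ(W > t) ≥ ℙ(c₁ > t/q)`,
which is the lower bound. For the upper bound fix `ρ = q r` with `1 < r < 1/q` and split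
`t = ∑ t (1 - ρ) ρ^k`: if `W > t`, some `c_{k+1}` exceeds a threshold of order `t r^k`, and a
union bound over these geometrically growing thresholds costs only a constant factor in
`ℙ(c₁ > t) ≤ t^{-α+ε}`. The same thresholds give almost sure convergence by Borel–Cantelli.
-/

open MeasureTheory Filter ProbabilityTheory Topology

/-- `F t = t ^ (-α + o(1))` as `t → ∞`. -/
def HasTailExponent (F : ℝ → ℝ) (α : ℝ) : Prop :=
  Tendsto (fun t => Real.log (F t) / Real.log t) atTop (𝓝 (-α))

namespace HasTailExponent

variable {F : ℝ → ℝ} {α : ℝ}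

lemma of_eventually_rpow_bounds
    (h : ∀ᶠ ε in 𝓝[>] 0, ∀ᶠ t in atTop, t ^ (-(α + ε)) ≤ F t ∧ F t ≤ t ^ (-(α - ε))) :
    HasTailExponent F α := by
  refine Metric.tendsto_nhds.2 fun η hη => ?_
  obtain ⟨ε, hbounds, hε, hεη⟩ := (h.and (Ioo_mem_nhdsGT hη)).exists
  filter_upwards [hbounds, eventually_gt_atTop 1] with t ⟨hlower, hupper⟩ ht
  have hlog : 0 < Real.log t := Real.log_pos ht
  have hF : 0 < F t := (Real.rpow_pos_of_pos (by linarith) _).trans_le hlower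
  have h₁ := (Real.log_le_log_iff (Real.rpow_pos_of_pos (by linarith) _) hF).2 hlower
  have h₂ := (Real.log_le_log_iff hF (Real.rpow_pos_of_pos (by linarith) _)).2 hupper
  rw [Real.log_rpow (by linarith)] at h₁ h₂
  have : -(α + ε) ≤ Real.log (F t) / Real.log t := (le_div_iff₀ hlog).2 h₁
  have : Real.log (F t) / Real.log t ≤ -(α - ε) := (div_le_iff₀ hlog).2 h₂
  rw [Real.dist_eq, abs_lt]
  constructor <;> linarith

lemma eventually_le_rpow (h : HasTailExponent F α) {ε : ℝ} (hε : 0 < ε) :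
    ∀ᶠ t in atTop, F t ≤ t ^ (-(α - ε)) := by
  filter_upwards [h.eventually_lt_const (by linarith : -α < -(α - ε)), eventually_gt_atTop 1]
    with t hratio ht
  rcases le_or_gt (F t) 0 with hF | hF
  · exact hF.trans (Real.rpow_nonneg (by linarith) _)
  rw [← Real.log_le_log_iff hF (Real.rpow_pos_of_pos (by linarith) _),
    Real.log_rpow (by linarith)]
  exact (div_le_iff₀ (Real.log_pos ht)).1 hratio.le

lemma eventually_rpow_le (h : HasTailExponent F α) (hF : ∀ t, 0 ≤ F t) (hα : 0 < α)
    {ε : ℝ} (hε : 0 < ε) : ∀ᶠ t in atTop, t ^ (-(α + ε)) ≤ F t := by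
  filter_upwards [h.eventually_const_lt (by linarith : -(α + ε) < -α),
    h.eventually_lt_const (neg_lt_zero.2 hα), eventually_gt_atTop 1] with t hratio hneg ht
  -- a negative ratio rules out `F t = 0`, where `Real.log` would vanish
  have hFt : 0 < F t := by
    refine (hF t).lt_of_ne fun h0 => ?_
    simp [← h0] at hneg
  rw [← Real.log_le_log_iff (Real.rpow_pos_of_pos (by linarith) _) hFt,
    Real.log_rpow (by linarith)]
  exact (le_div_iff₀ (Real.log_pos ht)).1 hratio.le

lemma comp_mul_left (h : HasTailExponent F α) {c : ℝ} (hc : 0 < c) :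
    HasTailExponent (fun t => F (c * t)) α := by
  have hscaled : Tendsto (fun t => Real.log (F (c * t)) / Real.log (c * t)) atTop (𝓝 (-α)) :=
    h.comp (tendsto_id.const_mul_atTop hc)
  have hratio : Tendsto (fun t => Real.log (c * t) / Real.log t) atTop (𝓝 1) := by
    have : Tendsto (fun t => Real.log c / Real.log t + 1) atTop (𝓝 (0 + 1)) :=
      (tendsto_const_nhds.div_atTop Real.tendsto_log_atTop).add_const 1
    rw [zero_add] at this
    refine this.congr' ?_
    filter_upwards [eventually_gt_atTop 1] with t ht
    rw [Real.log_mul hc.ne' (by linarith), add_div, div_self (Real.log_pos ht).ne']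
  have := hscaled.mul hratio
  rw [mul_one] at this
  refine this.congr' ?_
  filter_upwards [(tendsto_id.const_mul_atTop hc).eventually (eventually_gt_atTop 1)] with t ht
  exact div_mul_div_cancel₀ (Real.log_pos ht).ne'

end HasTailExponent

lemma eventually_const_mul_rpow_le_rpow (C : ℝ) {a b : ℝ} (hab : a < b) :
    ∀ᶠ t : ℝ in atTop, C * t ^ a ≤ t ^ b := by
  filter_upwards [(tendsto_rpow_atTop (sub_pos.2 hab)).eventually_ge_atTop C,
    eventually_gt_atTop 0] with t hC ht
  calc C * t ^ a ≤ t ^ (b - a) * t ^ a := by gcongr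
    _ = t ^ b := by rw [← Real.rpow_add ht, sub_add_cancel]

lemma exists_mul_lt_of_lt_tsum {ι : Type*} {f g : ι → ℝ} (hf : ∀ i, 0 ≤ f i) (hg : HasSum g 1)
    {t : ℝ} (ht : t < ∑' i, f i) : ∃ i, t * g i < f i := by
  by_contra! hle
  have hsum : Summable f := (hg.summable.mul_left t).of_nonneg_of_le hf hle
  have : ∑' i, f i ≤ t := by
    simpa [tsum_mul_left, hg.tsum_eq] using hsum.tsum_le_tsum hle (hg.summable.mul_left t)
  linarith

lemma hasSum_one_sub_mul_geometric {ρ : ℝ} (hρ₀ : 0 ≤ ρ) (hρ₁ : ρ < 1) :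
    HasSum (fun k : ℕ => (1 - ρ) * ρ ^ k) 1 := by
  simpa [mul_inv_cancel₀ (sub_pos.2 hρ₁).ne'] using
    (hasSum_geometric_of_lt_one hρ₀ hρ₁).mul_left (1 - ρ)

section GeometricSeries

variable {Ω : Type*} [MeasurableSpace Ω] {P : Measure Ω} [IsFiniteMeasure P]
  {X : ℕ → Ω → ℝ} {Y : Ω → ℝ}

lemma tsum_measure_mul_pow_lt_le (hX : ∀ k, IdentDistrib (X k) Y P P) {s₀ β : ℝ}
    (hY : ∀ s ≥ s₀, (P {ω | s < Y ω}).toReal ≤ s ^ (-β)) (hβ : 0 < β) {r : ℝ} (hr : 1 < r)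
    {a : ℝ} (ha : s₀ ≤ a) (ha₀ : 0 < a) :
    ∑' k, P {ω | a * r ^ k < X k ω} ≤ ENNReal.ofReal (a ^ (-β) * (1 - r ^ (-β))⁻¹) := by
  have hr' : r ^ (-β) < 1 := Real.rpow_lt_one_of_one_lt_of_neg hr (neg_lt_zero.2 hβ)
  have hterm : ∀ k : ℕ, P {ω | a * r ^ k < X k ω} ≤ ENNReal.ofReal (a ^ (-β) * (r ^ (-β)) ^ k) := by
    intro k
    have hident : P {ω | a * r ^ k < X k ω} = P {ω | a * r ^ k < Y ω} :=
      (hX k).measure_mem_eq measurableSet_Ioi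
    rw [hident, ← ENNReal.ofReal_toReal (measure_ne_top _ _)]
    refine ENNReal.ofReal_le_ofReal ((hY _ (ha.trans (le_mul_of_one_le_right ha₀.le
      (one_le_pow₀ hr.le)))).trans_eq ?_)
    rw [Real.mul_rpow ha₀.le (by positivity), Real.rpow_pow_comm (by linarith)]
  calc ∑' k, P {ω | a * r ^ k < X k ω}
      ≤ ∑' k : ℕ, ENNReal.ofReal (a ^ (-β) * (r ^ (-β)) ^ k) := ENNReal.tsum_le_tsum hterm
    _ = ENNReal.ofReal (a ^ (-β) * (1 - r ^ (-β))⁻¹) := by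
      rw [← ENNReal.ofReal_tsum_of_nonneg (fun k => by positivity)
        ((summable_geometric_of_lt_one (by positivity) hr').mul_left _), tsum_mul_left,
        tsum_geometric_of_lt_one (by positivity) hr']

lemma ae_summable_pow_mul (hX : ∀ k, IdentDistrib (X k) Y P P) (hX₀ : ∀ k ω, 0 ≤ X k ω)
    {s₀ β : ℝ} (hY : ∀ s ≥ s₀, (P {ω | s < Y ω}).toReal ≤ s ^ (-β)) (hβ : 0 < β)
    {q r : ℝ} (hq : 0 ≤ q) (hr : 1 < r) (hqr : q * r < 1) :
    ∀ᵐ ω ∂P, Summable fun k => q ^ k * X k ω := by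
  set a := max s₀ 1
  have ha₀ : 0 < a := lt_max_of_lt_right one_pos
  -- Borel–Cantelli: almost surely `X k ≤ a * r ^ k` for all large `k`
  have hfin : ∑' k, P {ω | a * r ^ k < X k ω} ≠ ⊤ :=
    ne_top_of_le_ne_top ENNReal.ofReal_ne_top
      (tsum_measure_mul_pow_lt_le hX hY hβ hr (le_max_left _ _) ha₀)
  filter_upwards [ae_eventually_notMem hfin] with ω hω
  refine Summable.of_norm_bounded_eventually_nat
    ((summable_geometric_of_lt_one (by positivity) hqr).mul_left a) ?_
  filter_upwards [hω] with k hk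
  rw [Real.norm_of_nonneg (mul_nonneg (pow_nonneg hq k) (hX₀ k ω))]
  calc q ^ k * X k ω ≤ q ^ k * (a * r ^ k) := by gcongr; exact not_lt.1 hk
    _ = a * (q * r) ^ k := by ring

lemma measure_lt_tsum_pow_mul_le (hX : ∀ k, IdentDistrib (X k) Y P P) (hX₀ : ∀ k ω, 0 ≤ X k ω)
    {s₀ β : ℝ} (hY : ∀ s ≥ s₀, (P {ω | s < Y ω}).toReal ≤ s ^ (-β)) (hβ : 0 < β)
    {q r : ℝ} (hq : 0 < q) (hr : 1 < r) (hqr : q * r < 1) {t : ℝ} (ht : s₀ ≤ t * (1 - q * r))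
    (ht₀ : 0 < t) :
    P {ω | t < ∑' k, q ^ k * X k ω} ≤
      ENNReal.ofReal ((t * (1 - q * r)) ^ (-β) * (1 - r ^ (-β))⁻¹) := by
  -- splitting `t = ∑ t (1 - q r) (q r) ^ k`, some term `q ^ k * X k` must exceed its share
  have hsub : {ω | t < ∑' k, q ^ k * X k ω} ⊆ ⋃ k, {ω | t * (1 - q * r) * r ^ k < X k ω} := by
    intro ω hω
    obtain ⟨k, hk⟩ := exists_mul_lt_of_lt_tsum (fun k => mul_nonneg (pow_nonneg hq.le k) (hX₀ k ω))
      (hasSum_one_sub_mul_geometric (by positivity) hqr) hω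
    refine Set.mem_iUnion.2 ⟨k, lt_of_mul_lt_mul_left ?_ (pow_nonneg hq.le k)⟩
    calc q ^ k * (t * (1 - q * r) * r ^ k) = t * ((1 - q * r) * (q * r) ^ k) := by ring
      _ < q ^ k * X k ω := hk
  calc P {ω | t < ∑' k, q ^ k * X k ω}
      ≤ ∑' k, P {ω | t * (1 - q * r) * r ^ k < X k ω} :=
        (measure_mono hsub).trans (measure_iUnion_le _)
    _ ≤ _ := tsum_measure_mul_pow_lt_le hX hY hβ hr ht (mul_pos ht₀ (sub_pos.2 hqr))

theorem hasTailExponent_tsum_pow_mul (hX : ∀ k, IdentDistrib (X k) Y P P)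
    (hX₀ : ∀ k ω, 0 ≤ X k ω) {α : ℝ} (hY : HasTailExponent (fun s => (P {ω | s < Y ω}).toReal) α)
    (hα : 0 < α) {q : ℝ} (hq : 0 < q) (hq₁ : q < 1) :
    (∀ᵐ ω ∂P, Summable fun k => q ^ k * X k ω) ∧
      HasTailExponent (fun t => (P {ω | t < ∑' k, q ^ k * X k ω}).toReal) α := by
  obtain ⟨r, hr, hrq⟩ := exists_between ((one_lt_inv₀ hq).2 hq₁)
  have hqr : q * r < 1 := (lt_inv_mul_iff₀ hq).1 (by rwa [mul_one])
  obtain ⟨s₁, hs₁⟩ := eventually_atTop.1 (hY.eventually_le_rpow (half_pos hα))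
  have hsum := ae_summable_pow_mul hX hX₀ hs₁ (by linarith) hq.le hr hqr
  refine ⟨hsum, HasTailExponent.of_eventually_rpow_bounds ?_⟩
  filter_upwards [Ioo_mem_nhdsGT hα] with ε ⟨hε, hεα⟩
  have hlower : ∀ t, P {ω | t < Y ω} ≤ P {ω | t < ∑' k, q ^ k * X k ω} := by
    intro t
    rw [← show P {ω | t < X 0 ω} = P {ω | t < Y ω} from (hX 0).measure_mem_eq measurableSet_Ioi]
    refine measure_mono_ae (hsum.mono fun ω hω hX0 => ?_)
    have := hω.le_tsum 0 fun k _ => mul_nonneg (pow_nonneg hq.le k) (hX₀ k ω)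
    simp only [pow_zero, one_mul] at this
    exact lt_of_lt_of_le hX0 this
  -- the constant of the union bound is absorbed into `t ^ (ε / 2)`
  have hupper : ∀ᶠ t in atTop, (P {ω | t < ∑' k, q ^ k * X k ω}).toReal ≤
      (1 - q * r) ^ (-(α - ε / 2)) * (1 - r ^ (-(α - ε / 2)))⁻¹ * t ^ (-(α - ε / 2)) := by
    obtain ⟨s₀, hs₀⟩ := eventually_atTop.1 (hY.eventually_le_rpow (half_pos hε))
    filter_upwards [eventually_ge_atTop (s₀ / (1 - q * r)), eventually_gt_atTop 0] with t ht ht₀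
    refine ENNReal.toReal_le_of_le_ofReal ?_ ((measure_lt_tsum_pow_mul_le hX hX₀ hs₀
      (by linarith) hq hr hqr ((div_le_iff₀ (sub_pos.2 hqr)).1 ht) ht₀).trans_eq ?_)
    · have : r ^ (-(α - ε / 2)) ≤ 1 := Real.rpow_le_one_of_one_le_of_nonpos hr.le (by linarith)
      positivity
    · rw [Real.mul_rpow ht₀.le (sub_pos.2 hqr).le]; ring_nf
  filter_upwards [hY.eventually_rpow_le (fun _ => ENNReal.toReal_nonneg) hα hε, hupper,
    eventually_const_mul_rpow_le_rpow ((1 - q * r) ^ (-(α - ε / 2)) * (1 - r ^ (-(α - ε / 2)))⁻¹)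
      (by linarith : -(α - ε / 2) < -(α - ε))] with t h₁ h₂ h₃
  exact ⟨h₁.trans (ENNReal.toReal_mono (measure_ne_top _ _) (hlower t)), h₂.trans h₃⟩

end GeometricSeries

theorem tail_of_geometric_sum_general
    {Ω : Type*} [MeasurableSpace Ω] (P : Measure Ω) [IsProbabilityMeasure P]
    (c : ℕ → Ω → ℝ)
    (hpos : ∀ k ω, 0 < c k ω)
    (hident : ∀ k, IdentDistrib (c k) (c 1) P P)
    (α : ℝ) (hα : 0 < α)
    (htail : Tendsto (fun t : ℝ => Real.log (P {ω | c 1 ω > t}).toReal / Real.log t)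
      atTop (nhds (-α)))
    (δ : ℝ) (hδ : 0 < δ) :
    (∀ᵐ ω ∂P, Summable (fun k : ℕ => Real.exp (-2 * δ * (k + 1)) * c (k + 1) ω)) ∧
    Tendsto
      (fun t : ℝ =>
        Real.log
          (P {ω | (∑' k : ℕ, Real.exp (-2 * δ * (k + 1)) * c (k + 1) ω) > t}).toReal
          / Real.log t)
      atTop (nhds (-α)) := by
  set q := Real.exp (-2 * δ)
  have hq : 0 < q := Real.exp_pos _
  have hq₁ : q < 1 := Real.exp_lt_one_iff.2 (by linarith)
  have hweight : ∀ k : ℕ, Real.exp (-2 * δ * (k + 1)) = q ^ (k + 1) := fun k => by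
    rw [← Real.exp_nat_mul]; push_cast; ring_nf
  have hseries : ∀ ω, ∑' k : ℕ, q ^ (k + 1) * c (k + 1) ω = q * ∑' k : ℕ, q ^ k * c (k + 1) ω :=
    fun ω => by rw [← tsum_mul_left]; exact tsum_congr fun k => by ring
  obtain ⟨hsum, htail'⟩ := hasTailExponent_tsum_pow_mul (fun k => hident (k + 1))
    (fun k ω => (hpos (k + 1) ω).le) htail hα hq hq₁
  simp_rw [hweight]
  refine ⟨hsum.mono fun ω h => (h.mul_left q).congr fun k => by ring, ?_⟩
  simpa only [HasTailExponent, inv_mul_lt_iff₀ hq, ← hseries, gt_iff_lt] using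
    htail'.comp_mul_left (inv_pos.2 hq)

/-- **Tail of the geometric sum of heavy-tailed conductances (BiRC, Lemma on `X`).**
Let `(c_k)_{k≥1}` be i.i.d. strictly positive random variables with
`lim_{t→∞} log P(c₁ > t)/log t = -α`, `α ∈ (0,∞)`, and let `δ > 0`. Then the series
`W := Σ_{k≥1} e^{-2δk} c_k` converges `P`-a.s. and
`lim_{t→∞} log P(W > t)/log t = -α`. -/
theorem tail_of_geometric_sum
    {Ω : Type*} [MeasurableSpace Ω] (P : Measure Ω) [IsProbabilityMeasure P]
    (c : ℕ → Ω → ℝ) (hmeas : ∀ k, Measurable (c k))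
    (hpos : ∀ k ω, 0 < c k ω)
    (hindep : iIndepFun c P)
    (hident : ∀ k, IdentDistrib (c k) (c 1) P P)
    (α : ℝ) (hα : 0 < α)
    (htail : Tendsto (fun t : ℝ => Real.log (P {ω | c 1 ω > t}).toReal / Real.log t)
      atTop (nhds (-α)))
    (δ : ℝ) (hδ : 0 < δ) :
    (∀ᵐ ω ∂P, Summable (fun k : ℕ => Real.exp (-2 * δ * (k + 1)) * c (k + 1) ω)) ∧
    Tendsto
      (fun t : ℝ =>
        Real.log
          (P {ω | (∑' k : ℕ, Real.exp (-2 * δ * (k + 1)) * c (k + 1) ω) > t}).toReal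
          / Real.log t)
      atTop (nhds (-α)) :=
  tail_of_geometric_sum_general P c hpos hident α hα htail δ hδ
end

section
/- Let (V_k)_{k≥0} be nonnegative random variables, all with the same distribution as a random variable V (no independence is assumed), and suppose lim_{t→∞} log ℙ(V > t)/log t = −α for some α ∈ (0, 1]. Then for every β > 1/α one has limsup_{n→∞} log ℙ(Σ_{k=0}^{n−1} V_k ≥ n^β)/log n ≤ 1 − αβ. -/
/-!
For `0 < p ≤ 1` the map `x ↦ x ^ p` is subadditive on `[0, ∞)`, so Markov's inequality for the
`p`-th power of the sum gives `ℙ(S_n ≥ n^β) ≤ n 𝔼[V^p] n^(-pβ)`, with no independence needed.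
If `p < α`, the tail `ℙ(V > t) ≤ t^(-q)` for some `q ∈ (p, α)` makes `𝔼[V^p]` finite, so the
limsup is at most `1 - pβ`; now let `p ↑ α`. The lower bound `ℙ(S_n ≥ n^β) ≥ ℙ(V > n^β)` is
needed because `Real.log 0 = 0` and the limsup of a sequence unbounded below is a junk value.
-/

open MeasureTheory Filter Real Set Finset ProbabilityTheory

lemma eventually_le_rpow_of_tendsto_log_div_log_s14 {g : ℝ → ℝ} {a b : ℝ}
    (hg : Tendsto (fun t => log (g t) / log t) atTop (nhds a)) (hab : a < b) :
    ∀ᶠ t in atTop, g t ≤ t ^ b := by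
  filter_upwards [hg.eventually_lt_const hab, eventually_gt_atTop 1] with t ht ht1
  have ht0 : 0 < t := one_pos.trans ht1
  rcases le_or_gt (g t) 0 with hg0 | hg0
  · exact hg0.trans (rpow_nonneg ht0.le b)
  · rw [div_lt_iff₀ (log_pos ht1), ← log_rpow ht0] at ht
    exact ((log_lt_log_iff hg0 (rpow_pos_of_pos ht0 b)).1 ht).le

lemma eventually_rpow_le_of_tendsto_log_div_log_s14 {g : ℝ → ℝ} {a b : ℝ} (hg0 : ∀ t, 0 ≤ g t)
    (hg : Tendsto (fun t => log (g t) / log t) atTop (nhds a)) (ha : a < 0) (hba : b < a) :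
    ∀ᶠ t in atTop, t ^ b ≤ g t := by
  filter_upwards [hg.eventually_const_lt hba, hg.eventually_lt_const ha,
    eventually_gt_atTop 1] with t ht hneg ht1
  have ht0 : 0 < t := one_pos.trans ht1
  have hgt : 0 < g t := (hg0 t).lt_of_ne fun h => by simp [← h] at hneg
  rw [lt_div_iff₀ (log_pos ht1), ← log_rpow ht0] at ht
  exact ((log_lt_log_iff (rpow_pos_of_pos ht0 b) hgt).1 ht).le

lemma limsup_log_div_log_le {u : ℕ → ℝ} {b C e : ℝ}
    (hlow : ∀ᶠ n : ℕ in atTop, (n : ℝ) ^ b ≤ u n)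
    (hup : ∀ᶠ n : ℕ in atTop, u n ≤ C * (n : ℝ) ^ e) :
    limsup (fun n : ℕ => log (u n) / log n) atTop ≤ e := by
  have hbounds : ∀ᶠ n : ℕ in atTop,
      b ≤ log (u n) / log n ∧ log (u n) / log n ≤ log C / log n + e := by
    filter_upwards [hlow, hup, eventually_gt_atTop 1] with n hlo hhi hn
    have hn0 : (0 : ℝ) < n := by positivity
    have hlogn : 0 < log n := log_pos (by exact_mod_cast hn)
    have hu : 0 < u n := (rpow_pos_of_pos hn0 b).trans_le hlo
    have hC : 0 < C := pos_of_mul_pos_left (hu.trans_le hhi) (rpow_nonneg hn0.le e)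
    constructor
    · rw [le_div_iff₀ hlogn, ← log_rpow hn0]
      exact log_le_log (rpow_pos_of_pos hn0 b) hlo
    · rw [div_add' _ _ _ hlogn.ne', div_le_div_iff_of_pos_right hlogn, ← log_rpow hn0,
        ← log_mul hC.ne' (rpow_pos_of_pos hn0 e).ne']
      exact log_le_log hu hhi
  have hlim : Tendsto (fun n : ℕ => log C / log n + e) atTop (nhds e) := by
    simpa using (tendsto_const_nhds.div_atTop
      (tendsto_log_atTop.comp tendsto_natCast_atTop_atTop)).add_const e
  calc limsup (fun n : ℕ => log (u n) / log n) atTop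
      ≤ limsup (fun n : ℕ => log C / log n + e) atTop :=
        limsup_le_limsup (hbounds.mono fun _ h => h.2)
          (isCoboundedUnder_le_of_eventually_le _ (hbounds.mono fun _ h => h.1))
          hlim.isBoundedUnder_le
    _ = e := hlim.limsup_eq

lemma Real.rpow_sum_le_sum_rpow {ι : Type*} (s : Finset ι) {f : ι → ℝ} (hf : ∀ i ∈ s, 0 ≤ f i)
    {p : ℝ} (hp : 0 < p) (hp1 : p ≤ 1) :
    (∑ i ∈ s, f i) ^ p ≤ ∑ i ∈ s, f i ^ p := by
  classical
  induction s using Finset.induction_on with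
  | empty => simp [zero_rpow hp.ne']
  | insert i s hi ih =>
    rw [sum_insert hi, sum_insert hi]
    have hfi := hf i (mem_insert_self i s)
    have hfs : ∀ j ∈ s, 0 ≤ f j := fun j hj => hf j (mem_insert_of_mem hj)
    calc (f i + ∑ j ∈ s, f j) ^ p ≤ f i ^ p + (∑ j ∈ s, f j) ^ p :=
          rpow_add_le_add_rpow hfi (sum_nonneg hfs) hp.le hp1
      _ ≤ f i ^ p + ∑ j ∈ s, f j ^ p := by gcongr; exact ih hfs

section Moments

variable {Ω Ω' ι : Type*} [MeasurableSpace Ω] [MeasurableSpace Ω'] {μ : Measure Ω} {ν : Measure Ω'}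

lemma lintegral_rpow_lt_top_of_tail_le [IsFiniteMeasure μ] {X : Ω → ℝ} (hX : AEMeasurable X μ)
    (hX0 : 0 ≤ᵐ[μ] X) {p q : ℝ} (hp : 0 < p) (hpq : p < q)
    (htail : ∀ᶠ t in atTop, (μ {ω | t < X ω}).toReal ≤ t ^ (-q)) :
    ∫⁻ ω, ENNReal.ofReal (X ω ^ p) ∂μ < ⊤ := by
  obtain ⟨t₀, ht₀⟩ := (htail.and (eventually_gt_atTop 0)).exists_forall_of_atTop
  have ht₀0 : 0 < t₀ := (ht₀ t₀ le_rfl).2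
  rw [lintegral_rpow_eq_lintegral_meas_lt_mul μ hX0 hX hp, ← Ioc_union_Ioi_eq_Ioi ht₀0.le]
  refine ENNReal.mul_lt_top ENNReal.ofReal_lt_top
    ((lintegral_union_le _ _ _).trans_lt (ENNReal.add_lt_top.2 ⟨?_, ?_⟩))
  · calc ∫⁻ t in Ioc 0 t₀, μ {ω | t < X ω} * ENNReal.ofReal (t ^ (p - 1))
        ≤ ∫⁻ t in Ioc 0 t₀, μ univ * ENNReal.ofReal (t ^ (p - 1)) :=
          setLIntegral_mono' measurableSet_Ioc fun t _ => by gcongr; exact subset_univ _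
      _ = μ univ * ∫⁻ t in Ioc 0 t₀, ENNReal.ofReal (t ^ (p - 1)) :=
          lintegral_const_mul' _ _ (measure_ne_top μ univ)
      _ < ⊤ := ENNReal.mul_lt_top (measure_lt_top μ univ)
          (intervalIntegral.intervalIntegrable_rpow' (by linarith) : IntervalIntegrable _ volume 0 t₀).1.lintegral_lt_top
  · calc ∫⁻ t in Ioi t₀, μ {ω | t < X ω} * ENNReal.ofReal (t ^ (p - 1))
        ≤ ∫⁻ t in Ioi t₀, ENNReal.ofReal (t ^ (p - 1 - q)) := by
          refine setLIntegral_mono' measurableSet_Ioi fun t (ht : t₀ < t) => ?_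
          have ht0 : 0 < t := ht₀0.trans ht
          rw [sub_eq_add_neg (p - 1), rpow_add ht0, mul_comm, ENNReal.ofReal_mul (rpow_nonneg ht0.le _),
            ← ENNReal.ofReal_toReal (measure_ne_top μ _)]
          gcongr
          exact (ht₀ t ht.le).1
      _ < ⊤ := (integrableOn_Ioi_rpow_of_lt (by linarith) ht₀0).lintegral_lt_top

lemma mul_measure_le_sum_le_card_mul_lintegral_rpow {V : ι → Ω → ℝ} {X : Ω' → ℝ} (s : Finset ι)
    (hV : ∀ i ω, 0 ≤ V i ω) (hident : ∀ i, IdentDistrib (V i) X μ ν) {p T : ℝ}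
    (hp : 0 < p) (hp1 : p ≤ 1) (hT : 0 ≤ T) :
    ENNReal.ofReal (T ^ p) * μ {ω | T ≤ ∑ i ∈ s, V i ω} ≤
      #s * ∫⁻ x, ENNReal.ofReal (X x ^ p) ∂ν := by
  have hpow : Measurable fun x : ℝ => ENNReal.ofReal (x ^ p) :=
    ENNReal.measurable_ofReal.comp (measurable_id.pow_const p)
  have hsum : AEMeasurable (fun ω => ∑ i ∈ s, V i ω) μ :=
    s.aemeasurable_fun_sum fun i _ => (hident i).aemeasurable_fst
  calc ENNReal.ofReal (T ^ p) * μ {ω | T ≤ ∑ i ∈ s, V i ω}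
      ≤ ENNReal.ofReal (T ^ p) *
          μ {ω | ENNReal.ofReal (T ^ p) ≤ ENNReal.ofReal ((∑ i ∈ s, V i ω) ^ p)} := by
        gcongr
        exact fun hω => ENNReal.ofReal_le_ofReal (rpow_le_rpow hT hω hp.le)
    _ ≤ ∫⁻ ω, ENNReal.ofReal ((∑ i ∈ s, V i ω) ^ p) ∂μ :=
        mul_meas_ge_le_lintegral₀ (hpow.comp_aemeasurable hsum) _
    _ ≤ ∫⁻ ω, ∑ i ∈ s, ENNReal.ofReal (V i ω ^ p) ∂μ := lintegral_mono fun ω => by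
        rw [← ENNReal.ofReal_sum_of_nonneg fun i _ => rpow_nonneg (hV i ω) p]
        exact ENNReal.ofReal_le_ofReal (rpow_sum_le_sum_rpow s (fun i _ => hV i ω) hp hp1)
    _ = ∑ i ∈ s, ∫⁻ ω, ENNReal.ofReal (V i ω ^ p) ∂μ :=
        lintegral_finsetSum' s fun i _ => hpow.comp_aemeasurable (hident i).aemeasurable_fst
    _ = #s * ∫⁻ x, ENNReal.ofReal (X x ^ p) ∂ν := by
        have heq (i : ι) : ∫⁻ ω, ENNReal.ofReal (V i ω ^ p) ∂μ =
            ∫⁻ x, ENNReal.ofReal (X x ^ p) ∂ν := ((hident i).comp hpow).lintegral_eq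
        rw [sum_congr rfl fun i _ => heq i, sum_const, nsmul_eq_mul]

lemma measure_lt_le_measure_le_sum {V : ι → Ω → ℝ} {X : Ω' → ℝ} (hV : ∀ i ω, 0 ≤ V i ω)
    {s : Finset ι} {i : ι} (hi : i ∈ s) (hident : IdentDistrib (V i) X μ ν) (T : ℝ) :
    ν {x | T < X x} ≤ μ {ω | T ≤ ∑ j ∈ s, V j ω} :=
  calc ν {x | T < X x} = μ (V i ⁻¹' Ioi T) := (hident.measure_mem_eq measurableSet_Ioi).symm
    _ ≤ μ {ω | T ≤ ∑ j ∈ s, V j ω} := measure_mono fun ω (hω : T < V i ω) =>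
      hω.le.trans (single_le_sum (fun j _ => hV j ω) hi)

lemma measure_rpow_le_sum_range_le {V : ℕ → Ω → ℝ} {X : Ω' → ℝ} (hV : ∀ k ω, 0 ≤ V k ω)
    (hident : ∀ k, IdentDistrib (V k) X μ ν) {p β : ℝ} (hp : 0 < p) (hp1 : p ≤ 1)
    (hfin : ∫⁻ x, ENNReal.ofReal (X x ^ p) ∂ν ≠ ⊤) {n : ℕ} (hn : n ≠ 0) :
    (μ {ω | (n : ℝ) ^ β ≤ ∑ k ∈ range n, V k ω}).toReal ≤
      (∫⁻ x, ENNReal.ofReal (X x ^ p) ∂ν).toReal * (n : ℝ) ^ (1 - p * β) := by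
  set M := ∫⁻ x, ENNReal.ofReal (X x ^ p) ∂ν
  have hn0 : (0 : ℝ) < n := by positivity
  have hTp : 0 < ((n : ℝ) ^ β) ^ p := by positivity
  have hmarkov := ENNReal.toReal_mono (ENNReal.mul_ne_top (ENNReal.natCast_ne_top _) hfin)
    (mul_measure_le_sum_le_card_mul_lintegral_rpow (range n) hV hident hp hp1
      (rpow_nonneg hn0.le β))
  rw [ENNReal.toReal_mul, ENNReal.toReal_mul, ENNReal.toReal_ofReal hTp.le, card_range,
    ENNReal.toReal_natCast] at hmarkov
  calc (μ {ω | (n : ℝ) ^ β ≤ ∑ k ∈ range n, V k ω}).toReal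
      ≤ n * M.toReal / ((n : ℝ) ^ β) ^ p := (le_div_iff₀' hTp).2 hmarkov
    _ = M.toReal * (n : ℝ) ^ (1 - p * β) := by
      rw [← rpow_mul hn0.le, rpow_sub hn0, rpow_one, mul_comm β p]
      ring

end Moments

theorem sum_identically_distributed_heavy_tail_general
    {Ω : Type*} [MeasurableSpace Ω] (P : Measure Ω) [IsProbabilityMeasure P]
    (V : ℕ → Ω → ℝ) (Vlim : Ω → ℝ)
    (hnonneg : ∀ k ω, 0 ≤ V k ω)
    (hident : ∀ k, ProbabilityTheory.IdentDistrib (V k) Vlim P P)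
    (α : ℝ) (hα : α ∈ Set.Ioc (0 : ℝ) 1)
    (htail : Tendsto (fun t : ℝ => Real.log (P {ω | Vlim ω > t}).toReal / Real.log t)
      atTop (nhds (-α)))
    (β : ℝ) (hβ : 1 / α < β) :
    limsup (fun n : ℕ =>
      Real.log (P {ω | (n : ℝ) ^ β ≤ ∑ k ∈ Finset.range n, V k ω}).toReal
        / Real.log n) atTop ≤ 1 - α * β := by
  obtain ⟨hα0, hα1⟩ := hα
  have hβ0 : 0 < β := (one_div_pos.2 hα0).trans hβ
  have hlow : ∀ᶠ n : ℕ in atTop,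
      (n : ℝ) ^ (-(α + 1) * β) ≤ (P {ω | (n : ℝ) ^ β ≤ ∑ k ∈ range n, V k ω}).toReal := by
    have htail_low := eventually_rpow_le_of_tendsto_log_div_log_s14 (fun _ => ENNReal.toReal_nonneg)
      htail (neg_neg_of_pos hα0) (by linarith : -(α + 1) < -α)
    filter_upwards [((tendsto_rpow_atTop hβ0).comp tendsto_natCast_atTop_atTop).eventually
      htail_low, eventually_ne_atTop 0] with n hn hn0
    rw [mul_comm, rpow_mul n.cast_nonneg]
    exact hn.trans <| ENNReal.toReal_mono (measure_ne_top _ _) <|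
      measure_lt_le_measure_le_sum hnonneg (mem_range.2 (Nat.pos_of_ne_zero hn0)) (hident 0) _
  have hVlim0 : 0 ≤ᵐ[P] Vlim :=
    (hident 0).ae_snd measurableSet_Ici (ae_of_all _ (hnonneg 0))
  have hbound : ∀ p ∈ Ioo 0 α, limsup (fun n : ℕ =>
      log (P {ω | (n : ℝ) ^ β ≤ ∑ k ∈ range n, V k ω}).toReal / log n) atTop ≤ 1 - p * β := by
    rintro p ⟨hp0, hpα⟩
    obtain ⟨q, hpq, hqα⟩ := exists_between hpα
    have hfin := lintegral_rpow_lt_top_of_tail_le (hident 0).aemeasurable_snd hVlim0 hp0 hpq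
      (eventually_le_rpow_of_tendsto_log_div_log_s14 htail (neg_lt_neg hqα))
    exact limsup_log_div_log_le hlow <| (eventually_ne_atTop 0).mono fun n hn =>
      measure_rpow_le_sum_range_le hnonneg hident hp0 (hpα.le.trans hα1) hfin.ne hn
  refine ge_of_tendsto ?_ (eventually_of_mem (Ioo_mem_nhdsLT hα0) hbound)
  exact ((continuous_const.sub (continuous_id.mul continuous_const)).tendsto α).mono_left
    nhdsWithin_le_nhds

/-- **Sum of identically distributed heavy-tailed variables (Term B estimate).**
Let `(V_k)_{k≥0}` be nonnegative random variables, each distributed as `V`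
(no independence assumed), with `lim_{t→∞} log P(V > t)/log t = -α`, `α ∈ (0,1]`.
Then for every `β > 1/α`,
`limsup_n log P(Σ_{k<n} V_k ≥ n^β)/log n ≤ 1 - αβ`. -/
theorem sum_identically_distributed_heavy_tail
    {Ω : Type*} [MeasurableSpace Ω] (P : Measure Ω) [IsProbabilityMeasure P]
    (V : ℕ → Ω → ℝ) (Vlim : Ω → ℝ)
    (hmeas : ∀ k, Measurable (V k)) (hVmeas : Measurable Vlim)
    (hnonneg : ∀ k ω, 0 ≤ V k ω)
    (hident : ∀ k, ProbabilityTheory.IdentDistrib (V k) Vlim P P)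
    (α : ℝ) (hα : α ∈ Set.Ioc (0 : ℝ) 1)
    (htail : Tendsto (fun t : ℝ => Real.log (P {ω | Vlim ω > t}).toReal / Real.log t)
      atTop (nhds (-α)))
    (β : ℝ) (hβ : 1 / α < β) :
    limsup (fun n : ℕ =>
      Real.log (P {ω | (n : ℝ) ^ β ≤ ∑ k ∈ Finset.range n, V k ω}).toReal
        / Real.log n) atTop ≤ 1 - α * β :=
  sum_identically_distributed_heavy_tail_general P V Vlim hnonneg hident α hα htail β hβ
end
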